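/- arXiv:1308.1212 — 12 statements merged into one kernel-verified Lean document; each statement's English description precedes it below -/
import Mathlib

section
/- Let d ≥ 3 and let w_1 ≥ w_2 ≥ ⋯ ≥ w_d ≥ 0 be real numbers. Then for every subset S ⊆ {2,…,d} with |S| = k where 1 ≤ k ≤ d−2, one has w_1 + (1/(d−1))·(w_2 + w_3 + ⋯ + w_d) ≥ (1/(k+1))·(w_1 + Σ_{i∈S} w_i) + (1/(d−k−1))·Σ_{i∈{2,…,d}∖S} w_i. -/
/-- For `d ≥ 3` and nonincreasing nonnegative weights `w 0 ≥ w 1 ≥ ⋯ ≥ w (d-1) ≥ 0`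
(user `i` of the paper is index `i-1`), for every subset `S` of `{1,…,d-1}` (i.e. of users
`2,…,d`) with `|S| = k`, `1 ≤ k ≤ d-2`, one has
`w 1 + (1/(d-1)) (w 2 + ⋯ + w d) ≥ (1/(k+1)) (w 1 + Σ_{i∈S} w i) + (1/(d-k-1)) Σ_{i∉S∪{1}} w i`. -/
theorem stmt0 (d : ℕ) (hd : 3 ≤ d) (w : Fin d → ℝ)
    (hmono : ∀ i j : Fin d, i ≤ j → w j ≤ w i) (hnn : ∀ i, 0 ≤ w i)
    (S : Finset (Fin d)) (hS : S ⊆ Finset.univ.erase ⟨0, by omega⟩)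
    (k : ℕ) (hk : S.card = k) (hk1 : 1 ≤ k) (hk2 : k ≤ d - 2) :
    (1 / ((k : ℝ) + 1)) * (w ⟨0, by omega⟩ + ∑ i ∈ S, w i)
      + (1 / ((d : ℝ) - (k : ℝ) - 1)) * ∑ i ∈ (Finset.univ.erase ⟨0, by omega⟩) \ S, w i
    ≤ w ⟨0, by omega⟩
      + (1 / ((d : ℝ) - 1)) * ∑ i ∈ Finset.univ.erase (⟨0, by omega⟩ : Fin d), w i := by
  have hd0 : 0 < d := by omega
  set z : Fin d := ⟨0, by omega⟩ with hz
  set A : ℝ := ∑ i ∈ S, w i with hA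
  set B : ℝ := ∑ i ∈ (Finset.univ.erase z) \ S, w i with hB
  have hwz : ∀ i : Fin d, w i ≤ w z := fun i => hmono z i (by simp [hz, Fin.le_def])
  have hAle : A ≤ (k : ℝ) * w z := by
    have := Finset.sum_le_card_nsmul S w (w z) (fun i _ => hwz i)
    rw [hk] at this
    simpa [nsmul_eq_mul] using this
  have hcard : ((Finset.univ.erase z) \ S).card = d - 1 - k := by
    rw [Finset.card_sdiff_of_subset hS, hk, Finset.card_erase_of_mem (Finset.mem_univ z),
      Finset.card_univ, Fintype.card_fin]
  have hBle : B ≤ ((d : ℝ) - 1 - k) * w z := by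
    have := Finset.sum_le_card_nsmul ((Finset.univ.erase z) \ S) w (w z) (fun i _ => hwz i)
    rw [hcard] at this
    have hcast : ((d - 1 - k : ℕ) : ℝ) = (d : ℝ) - 1 - k := by
      have : k + 1 ≤ d := by omega
      push_cast [Nat.cast_sub (by omega : k ≤ d - 1), Nat.cast_sub (by omega : 1 ≤ d)]
      ring
    simpa [nsmul_eq_mul, hcast] using this
  have hsum : (∑ i ∈ Finset.univ.erase z, w i) = A + B := by
    rw [hA, hB, ← Finset.sum_sdiff hS]; ring
  have hAnn : 0 ≤ A := Finset.sum_nonneg fun i _ => hnn i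
  have hBnn : 0 ≤ B := Finset.sum_nonneg fun i _ => hnn i
  have hann : 0 ≤ w z := hnn z
  rw [hsum]
  have hp : (0 : ℝ) < (k : ℝ) + 1 := by positivity
  have hq : (0 : ℝ) < (d : ℝ) - k - 1 := by
    have : (k : ℝ) + 2 ≤ d := by exact_mod_cast (by omega : k + 2 ≤ d)
    linarith
  have hr : (0 : ℝ) < (d : ℝ) - 1 := by
    have : (3 : ℝ) ≤ d := by exact_mod_cast hd
    linarith
  have hdk2 : (0 : ℝ) ≤ (d : ℝ) - k - 2 := by
    have : (k : ℝ) + 2 ≤ d := by exact_mod_cast (by omega : k + 2 ≤ d)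
    linarith
  have hk1' : (1 : ℝ) ≤ (k : ℝ) := by exact_mod_cast hk1
  rw [← sub_nonneg]
  have expand : w z + 1 / ((d : ℝ) - 1) * (A + B)
      - (1 / ((k : ℝ) + 1) * (w z + A) + 1 / ((d : ℝ) - (k : ℝ) - 1) * B)
      = (((k : ℝ) * w z - A) * ((d : ℝ) - k - 2) * ((d : ℝ) - k - 1)
        + (((d : ℝ) - 1 - k) * w z - B) * k * ((k : ℝ) + 1))
        / (((k : ℝ) + 1) * ((d : ℝ) - k - 1) * ((d : ℝ) - 1)) := by
    field_simp
    ring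
  rw [expand]
  apply div_nonneg
  · have h1 : 0 ≤ ((k : ℝ) * w z - A) * ((d : ℝ) - k - 2) * ((d : ℝ) - k - 1) := by
      apply mul_nonneg (mul_nonneg (by linarith) hdk2) (le_of_lt hq)
    have h2 : 0 ≤ (((d : ℝ) - 1 - k) * w z - B) * k * ((k : ℝ) + 1) := by
      apply mul_nonneg (mul_nonneg (by linarith) (by linarith)) (le_of_lt hp)
    linarith
  · positivity
end

section
/- Let n ≥ m ≥ 1 and let v_1 ≥ v_2 ≥ ⋯ ≥ v_n ≥ 0. Then the maximum over all allocations f : Fin n → Fin m of the time-sharing utility TS(f, v) (identical-basestations case) equals v_1 + v_2 + ⋯ + v_{m−1} + (1/(n−m+1))·(v_m + v_{m+1} + ⋯ + v_n), and this maximum is attained by the allocation that puts user j alone on basestation j for 1 ≤ j ≤ m−1 and puts users m, m+1, …, n all on basestation m. -/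
/-!
Summing basestation by basestation, `TS g v = ∑ i, v i * s i` with `s i = 1 / |g⁻¹(g i)|` the
time share of user `i`. A set of `k` users, `e j ≤ d j` of them on a basestation of load `d j`,
receives `∑ e j / d j ≤ (k + (m - 1)(n - m)) / (n - m + 1)`, and also at most `k`. Under the
allocation `f` that gives users `0, …, m - 2` their own basestation and stacks the others on the
last one, the first `k` users receive exactly the smaller of these two bounds. So the share
vector of `f` dominates that of any `g` in all prefix sums, and since `v` is nonincreasing and
nonnegative, Abel summation turns this into `TS g v ≤ TS f v`.
-/

/-- Time-sharing utility of an allocation `f` of `n` users to `m` basestations with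
weights `w i j`: each basestation's contribution is the sum of weights of its users
divided by its degree (empty basestations contribute `0`, via `0/0 = 0`). -/
noncomputable def TS {n m : ℕ} (f : Fin n → Fin m) (w : Fin n → Fin m → ℝ) : ℝ :=
  ∑ j : Fin m, (∑ i ∈ Finset.univ.filter (fun i => f i = j), w i j) /
    ((Finset.univ.filter (fun i => f i = j)).card : ℝ)

open Finset

lemma div_le_add_sub_div {e d N : ℝ} (hed : e ≤ d) (hd : 0 < d) (hdN : d ≤ N) :
    e / d ≤ (e + (N - d)) / N := by
  rw [div_le_div_iff₀ hd (hd.trans_le hdN)]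
  nlinarith [mul_nonneg (sub_nonneg.2 hed) (sub_nonneg.2 hdN)]

lemma natCast_div_le_add_div {e d : ℕ} {N : ℝ} (hed : e ≤ d) (hN : 1 ≤ N) :
    (e : ℝ) / d ≤ (e + (N - 1)) / N := by
  rcases Nat.eq_zero_or_pos d with rfl | hd
  · obtain rfl : e = 0 := Nat.le_zero.1 hed
    simp only [CharP.cast_eq_zero, div_zero, zero_add]
    exact div_nonneg (by linarith) (by linarith)
  have hd : (1 : ℝ) ≤ d := by exact_mod_cast hd
  have he : (e : ℝ) ≤ d := by exact_mod_cast hed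
  rcases le_total (d : ℝ) N with hdN | hNd
  · calc (e : ℝ) / d ≤ (e + (N - d)) / N := div_le_add_sub_div he (by linarith) hdN
      _ ≤ (e + (N - 1)) / N := by gcongr
  · calc (e : ℝ) / d ≤ e / N := div_le_div_of_nonneg_left (by positivity) (by linarith) hNd
      _ ≤ (e + (N - 1)) / N := by gcongr; linarith

/-- With `N = ∑ d - card ι + 1`, equality holds when `card ι - 1` parts are singletons counted
in `e` and the last part has size `N`. -/
lemma sum_natCast_div_le {ι : Type*} [Fintype ι] {d e : ι → ℕ} (hed : ∀ j, e j ≤ d j)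
    (hcard : Fintype.card ι ≤ ∑ j, d j) :
    ∑ j, (e j : ℝ) / d j ≤
      (∑ j, (e j : ℝ) + (Fintype.card ι - 1) * ((∑ j, (d j : ℝ)) - Fintype.card ι)) /
        ((∑ j, (d j : ℝ)) - Fintype.card ι + 1) := by
  set N : ℝ := (∑ j, (d j : ℝ)) - Fintype.card ι + 1 with hN
  have hN1 : 1 ≤ N := by
    have : (Fintype.card ι : ℝ) ≤ ∑ j, (d j : ℝ) := by exact_mod_cast hcard
    linarith
  have hNpos : 0 < N := by linarith
  rw [show (∑ j, (d j : ℝ)) - Fintype.card ι = N - 1 by rw [hN]; ring]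
  classical
  by_cases hbig : ∃ j₀, d j₀ = 0 ∨ N ≤ d j₀
  · obtain ⟨j₀, hj₀⟩ := hbig
    have hj₀_le : (e j₀ : ℝ) / d j₀ ≤ e j₀ / N := by
      rcases hj₀ with h0 | hNd
      · simp [h0, Nat.le_zero.1 (h0 ▸ hed j₀)]
      · exact div_le_div_of_nonneg_left (by positivity) hNpos hNd
    calc ∑ j, (e j : ℝ) / d j
        = (e j₀ : ℝ) / d j₀ + ∑ j ∈ univ.erase j₀, (e j : ℝ) / d j :=
          (add_sum_erase _ _ (mem_univ j₀)).symm
      _ ≤ e j₀ / N + ∑ j ∈ univ.erase j₀, ((e j : ℝ) + (N - 1)) / N :=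
          add_le_add hj₀_le (sum_le_sum fun j _ => natCast_div_le_add_div (hed j) hN1)
      _ = _ := by
          rw [← sum_div, sum_add_distrib, sum_const, card_erase_of_mem (mem_univ _), card_univ,
            nsmul_eq_mul, Nat.cast_pred (Fintype.card_pos_iff.2 ⟨j₀⟩), ← add_div,
            ← add_assoc, add_sum_erase _ (fun j => (e j : ℝ)) (mem_univ j₀)]
  · simp only [not_exists, not_or, not_le] at hbig
    calc ∑ j, (e j : ℝ) / d j ≤ ∑ j, ((e j : ℝ) + (N - d j)) / N :=
          sum_le_sum fun j _ => div_le_add_sub_div (by exact_mod_cast hed j)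
            (by exact_mod_cast Nat.pos_of_ne_zero (hbig j).1) (hbig j).2.le
      _ = _ := by
          rw [← sum_div, sum_add_distrib, sum_sub_distrib, sum_const, card_univ, nsmul_eq_mul]
          congr 1
          rw [hN]; ring

section TimeShare

variable {α β : Type*} [Fintype α] [DecidableEq β]

noncomputable def timeShare (g : α → β) (i : α) : ℝ := 1 / #{i' | g i' = g i}

lemma timeShare_le_one (g : α → β) (i : α) : timeShare g i ≤ 1 := by
  have : (1 : ℝ) ≤ #{i' | g i' = g i} := by exact_mod_cast card_pos.2 ⟨i, by simp⟩
  exact div_le_one_of_le₀ this (by positivity)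

lemma sum_timeShare_eq [Fintype β] (g : α → β) (P : Finset α) :
    ∑ i ∈ P, timeShare g i = ∑ j, (#{i ∈ P | g i = j} : ℝ) / #{i | g i = j} := by
  rw [← sum_fiberwise P g]
  refine sum_congr rfl fun j _ => ?_
  rw [sum_congr rfl fun i hi => by rw [timeShare, (mem_filter.1 hi).2], sum_const, nsmul_eq_mul,
    mul_one_div]

lemma sum_timeShare_le [Fintype β] (g : α → β) (hcard : Fintype.card β ≤ Fintype.card α)
    (P : Finset α) :
    ∑ i ∈ P, timeShare g i ≤
      (#P + (Fintype.card β - 1) * ((Fintype.card α : ℝ) - Fintype.card β)) /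
        ((Fintype.card α : ℝ) - Fintype.card β + 1) := by
  have hd : ∑ j, #{i | g i = j} = Fintype.card α := by
    rw [sum_card_fiberwise_eq_card_filter]; simp
  have he : ∑ j, #{i ∈ P | g i = j} = #P := by
    rw [sum_card_fiberwise_eq_card_filter]; simp
  have := sum_natCast_div_le (d := fun j => #{i | g i = j}) (e := fun j => #{i ∈ P | g i = j})
    (fun j => card_le_card (filter_subset_filter _ (subset_univ P))) (hd ▸ hcard)
  rwa [← Nat.cast_sum, ← Nat.cast_sum, hd, he, ← sum_timeShare_eq] at this

end TimeShare

lemma TS_eq_sum_mul_timeShare {n m : ℕ} (g : Fin n → Fin m) (v : Fin n → ℝ) :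
    TS g (fun i _ => v i) = ∑ i, v i * timeShare g i := by
  rw [TS, ← sum_fiberwise univ g (fun i => v i * timeShare g i)]
  refine sum_congr rfl fun j _ => ?_
  rw [sum_div]
  refine sum_congr rfl fun i hi => ?_
  rw [timeShare, (mem_filter.1 hi).2, mul_one_div]

lemma Fin.sum_filter_val_lt_succ {M : Type*} [AddCommMonoid M] {n k : ℕ} (hk : k < n)
    (f : Fin n → M) :
    ∑ i : Fin n with i.val < k + 1, f i = ∑ i : Fin n with i.val < k, f i + f ⟨k, hk⟩ := by
  have : ({i | i.val < k + 1} : Finset (Fin n)) =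
      insert ⟨k, hk⟩ ({i | i.val < k} : Finset (Fin n)) := by
    ext i; simp [Fin.ext_iff]; omega
  rw [this, sum_insert (by simp), add_comm]

lemma Fin.sum_mul_nonpos_of_sum_filter_nonpos {n : ℕ} {v a : Fin n → ℝ} (hv : Antitone v)
    (hv0 : ∀ i, 0 ≤ v i) (ha : ∀ k ≤ n, ∑ i : Fin n with i.val < k, a i ≤ 0) :
    ∑ i, v i * a i ≤ 0 := by
  have key : ∀ k (hk : k < n), ∑ i : Fin n with i.val < k + 1, v i * a i ≤
      v ⟨k, hk⟩ * ∑ i : Fin n with i.val < k + 1, a i := by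
    intro k hk
    induction k with
    | zero =>
      rw [Fin.sum_filter_val_lt_succ hk, Fin.sum_filter_val_lt_succ hk]
      simp
    | succ k ih =>
      rw [Fin.sum_filter_val_lt_succ hk, Fin.sum_filter_val_lt_succ hk]
      have hvk : v ⟨k + 1, hk⟩ ≤ v ⟨k, by omega⟩ := hv (Fin.mk_le_mk.2 k.le_succ)
      have := mul_le_mul_of_nonpos_right hvk (ha (k + 1) hk.le)
      linarith [ih (by omega)]
  rcases n with _ | n
  · simp
  · have hall : ({i | i.val < n + 1} : Finset (Fin (n + 1))) = univ :=
      filter_true_of_mem fun i _ => i.isLt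
    have := key n n.lt_succ_self
    rw [hall] at this
    exact this.trans (mul_nonpos_of_nonneg_of_nonpos (hv0 _) (hall ▸ ha (n + 1) le_rfl))

def stackAlloc (n m : ℕ) (hm : 1 ≤ m) : Fin n → Fin m := fun i =>
  if h : (i : ℕ) < m - 1 then ⟨i, lt_of_lt_of_le h (Nat.sub_le m 1)⟩
  else ⟨m - 1, Nat.sub_lt hm Nat.one_pos⟩

lemma stackAlloc_eq_stackAlloc_iff {n m : ℕ} (hm : 1 ≤ m) {i i' : Fin n} :
    stackAlloc n m hm i' = stackAlloc n m hm i ↔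
      i' = i ∨ m - 1 ≤ (i' : ℕ) ∧ m - 1 ≤ (i : ℕ) := by
  unfold stackAlloc
  split_ifs <;> simp [Fin.ext_iff] <;> omega

lemma timeShare_stackAlloc {n m : ℕ} (hm : 1 ≤ m) (i : Fin n) :
    timeShare (stackAlloc n m hm) i = if (i : ℕ) < m - 1 then 1 else 1 / ((n : ℝ) - m + 1) := by
  split_ifs with hi
  · have : ({i' | stackAlloc n m hm i' = stackAlloc n m hm i} : Finset (Fin n)) = {i} := by
      ext i'; simp [stackAlloc_eq_stackAlloc_iff]; omega
    simp [timeShare, this]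
  · have : ({i' | stackAlloc n m hm i' = stackAlloc n m hm i} : Finset (Fin n)) =
        ({i' | ¬ (i' : ℕ) < m - 1} : Finset (Fin n)) := by
      ext i'; simp [stackAlloc_eq_stackAlloc_iff]; omega
    have hcard : #({i' | ¬ (i' : ℕ) < m - 1} : Finset (Fin n)) = n - (m - 1) := by
      rw [filter_not, card_sdiff_of_subset (filter_subset _ _), Fin.card_filter_val_lt,
        card_univ, Fintype.card_fin, min_eq_right (by omega)]
    rw [timeShare, this, hcard, Nat.cast_sub (by omega), Nat.cast_pred (by omega)]
    ring

lemma sum_filter_timeShare_le_stackAlloc {n m : ℕ} (hm : 1 ≤ m) (hmn : m ≤ n)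
    (g : Fin n → Fin m) {k : ℕ} (hk : k ≤ n) :
    ∑ i : Fin n with i.val < k, timeShare g i ≤
      ∑ i : Fin n with i.val < k, timeShare (stackAlloc n m hm) i := by
  simp_rw [timeShare_stackAlloc]
  rcases le_total k (m - 1) with hkm | hkm
  · refine sum_le_sum fun i hi => ?_
    rw [if_pos ((mem_filter.1 hi).2.trans_le hkm)]
    exact timeShare_le_one g i
  have hcard : #({i | i.val < k} : Finset (Fin n)) = k := by
    rw [Fin.card_filter_val_lt, min_eq_right hk]
  have hsingle : #({i | i.val < k ∧ i.val < m - 1} : Finset (Fin n)) = m - 1 := by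
    simp_rw [← lt_min_iff, Fin.card_filter_val_lt]
    omega
  have hstack : #({i | i.val < k ∧ ¬ i.val < m - 1} : Finset (Fin n)) = k - (m - 1) := by
    have := card_filter_add_card_filter_not (s := {i : Fin n | i.val < k})
      (fun i : Fin n => i.val < m - 1)
    simp only [filter_filter] at this
    omega
  calc ∑ i : Fin n with i.val < k, timeShare g i
      ≤ (k + (m - 1) * ((n : ℝ) - m)) / ((n : ℝ) - m + 1) := by
        simpa [hcard] using sum_timeShare_le g (by simpa using hmn) {i : Fin n | i.val < k}
    _ = _ := by
        rw [sum_ite, sum_const, sum_const, filter_filter, filter_filter, hsingle, hstack,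
          nsmul_eq_mul, nsmul_eq_mul, Nat.cast_sub hkm, Nat.cast_pred hm]
        have : (0 : ℝ) < n - m + 1 := by
          have : (m : ℝ) ≤ n := by exact_mod_cast hmn
          linarith
        field_simp
        ring

lemma TS_le_TS_stackAlloc {n m : ℕ} (hm : 1 ≤ m) (hmn : m ≤ n) {v : Fin n → ℝ}
    (hv : Antitone v) (hv0 : ∀ i, 0 ≤ v i) (g : Fin n → Fin m) :
    TS g (fun i _ => v i) ≤ TS (stackAlloc n m hm) (fun i _ => v i) := by
  rw [TS_eq_sum_mul_timeShare, TS_eq_sum_mul_timeShare, ← sub_nonpos, ← sum_sub_distrib]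
  simp_rw [← mul_sub]
  refine Fin.sum_mul_nonpos_of_sum_filter_nonpos hv hv0 fun k hk => ?_
  rw [sum_sub_distrib, sub_nonpos]
  exact sum_filter_timeShare_le_stackAlloc hm hmn g hk

lemma TS_stackAlloc {n m : ℕ} (hm : 1 ≤ m) (v : Fin n → ℝ) :
    TS (stackAlloc n m hm) (fun i _ => v i) =
      ∑ i : Fin n with i.val < m - 1, v i +
        1 / ((n : ℝ) - m + 1) * ∑ i : Fin n with m - 1 ≤ i.val, v i := by
  simp_rw [TS_eq_sum_mul_timeShare, timeShare_stackAlloc, mul_ite, mul_one, sum_ite, mul_sum,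
    not_lt, mul_comm]

/-- For `n ≥ m ≥ 1` and nonincreasing nonnegative weights
`v 0 ≥ v 1 ≥ ⋯ ≥ v (n-1) ≥ 0` (identical basestations), the allocation that puts user `j`
alone on basestation `j` for `j < m-1` and all remaining users on basestation `m-1`
attains the maximum of the time-sharing utility, and this maximum equals
`v 1 + ⋯ + v (m-1) + (1/(n-m+1)) (v m + ⋯ + v n)` (paper's 1-indexed notation). -/
theorem stmt1 (n m : ℕ) (hm : 1 ≤ m) (hmn : m ≤ n) (v : Fin n → ℝ)
    (hmono : ∀ i j : Fin n, i ≤ j → v j ≤ v i) (hnn : ∀ i, 0 ≤ v i) :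
    (∀ g : Fin n → Fin m, TS g (fun i _ => v i) ≤
        (∑ i ∈ Finset.univ.filter (fun i : Fin n => (i : ℕ) < m - 1), v i)
          + (1 / ((n : ℝ) - (m : ℝ) + 1)) *
            ∑ i ∈ Finset.univ.filter (fun i : Fin n => m - 1 ≤ (i : ℕ)), v i)
    ∧ TS (fun i : Fin n =>
          if h : (i : ℕ) < m - 1 then ⟨(i : ℕ), lt_of_lt_of_le h (Nat.sub_le m 1)⟩
          else ⟨m - 1, by omega⟩) (fun i _ => v i) =
        (∑ i ∈ Finset.univ.filter (fun i : Fin n => (i : ℕ) < m - 1), v i)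
          + (1 / ((n : ℝ) - (m : ℝ) + 1)) *
            ∑ i ∈ Finset.univ.filter (fun i : Fin n => m - 1 ≤ (i : ℕ)), v i := by
  have hv : Antitone v := fun i j => hmono i j
  exact ⟨fun g => (TS_le_TS_stackAlloc hm hmn hv hnn g).trans_eq (TS_stackAlloc hm v),
    TS_stackAlloc hm v⟩
end

section
/- Let n ≥ m ≥ 1 and let v : Fin n → ℝ be nonnegative weights (in arbitrary arrival order), with identical basestations. Let RR be the round-robin allocation RR(i) = 1 + (i mod m) (so every basestation receives at most ⌈n/m⌉ users). Then for every allocation g : Fin n → Fin m, TS(g, v) ≤ ⌈n/m⌉ · TS(RR, v). -/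
/-! Every allocation has utility at most the total weight `∑ v`, since each basestation
contributes the average of the nonnegative weights of its users. Round robin uses every
basestation and puts at most `⌈n/m⌉` users on each, so each basestation contributes at least
a `1/⌈n/m⌉` fraction of its users' total weight, and `⌈n/m⌉ · TS(RR, v) ≥ ∑ v`. -/

open Finset

section TimeSharing

variable {ι : Type*} {n m : ℕ}

lemma sum_div_card_le_sum (s : Finset ι) {v : ι → ℝ} (hv : ∀ i ∈ s, 0 ≤ v i) :
    (∑ i ∈ s, v i) / #s ≤ ∑ i ∈ s, v i := by
  rcases s.eq_empty_or_nonempty with rfl | hs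
  · simp
  · exact div_le_self (sum_nonneg hv) (by exact_mod_cast hs.card_pos)

lemma TS_le_sum (f : Fin n → Fin m) {v : Fin n → ℝ} (hv : ∀ i, 0 ≤ v i) :
    TS f (fun i _ => v i) ≤ ∑ i, v i := by
  rw [← sum_fiberwise univ f v]
  exact sum_le_sum fun j _ => sum_div_card_le_sum _ fun i _ => hv i

lemma sum_le_mul_TS_of_card_fiber_le (f : Fin n → Fin m) {v : Fin n → ℝ} (hv : ∀ i, 0 ≤ v i)
    {c : ℝ} (hf : Function.Surjective f) (hc : ∀ j, (#{i | f i = j} : ℝ) ≤ c) :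
    ∑ i, v i ≤ c * TS f (fun i _ => v i) := by
  rw [← sum_fiberwise univ f v, TS, mul_sum]
  refine sum_le_sum fun j _ => ?_
  obtain ⟨i₀, hi₀⟩ := hf j
  have hpos : (0 : ℝ) < #{i | f i = j} := by
    exact_mod_cast card_pos.mpr ⟨i₀, mem_filter.mpr ⟨mem_univ _, hi₀⟩⟩
  have havg : 0 ≤ (∑ i with f i = j, v i) / #{i | f i = j} :=
    div_nonneg (sum_nonneg fun i _ => hv i) hpos.le
  calc ∑ i with f i = j, v i
      = #{i | f i = j} * ((∑ i with f i = j, v i) / #{i | f i = j}) := by field_simp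
    _ ≤ c * ((∑ i with f i = j, v i) / #{i | f i = j}) := by gcongr; exact hc j

end TimeSharing

section RoundRobin

variable {n m : ℕ}

def roundRobin (hm : 0 < m) (i : Fin n) : Fin m := ⟨i % m, Nat.mod_lt _ hm⟩

lemma roundRobin_surjective (hm : 0 < m) (hmn : m ≤ n) :
    Function.Surjective (roundRobin (n := n) hm) :=
  fun j => ⟨⟨j, j.2.trans_le hmn⟩, Fin.ext (Nat.mod_eq_of_lt j.2)⟩

lemma card_roundRobin_fiber_le (hm : 0 < m) (j : Fin m) :
    #{i : Fin n | roundRobin hm i = j} ≤ ⌈(n : ℝ) / m⌉₊ := by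
  calc #{i : Fin n | roundRobin hm i = j}
      ≤ #(range ⌈(n : ℝ) / m⌉₊) := by
        refine card_le_card_of_injOn (fun i => (i : ℕ) / m) (fun i _ => ?_)
          (fun a ha b hb hab => ?_)
        · have hi : (i : ℕ) / m * m < n := (Nat.div_mul_le_self _ _).trans_lt i.2
          rw [coe_range, Set.mem_Iio, Nat.lt_ceil, lt_div_iff₀ (by exact_mod_cast hm)]
          exact_mod_cast hi
        · simp only [coe_filter, mem_univ, true_and, Set.mem_ofPred_eq, roundRobin,
            Fin.ext_iff] at ha hb hab
          ext
          rw [← Nat.div_add_mod a m, ← Nat.div_add_mod b m, hab, ha, hb]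
    _ = ⌈(n : ℝ) / m⌉₊ := card_range _

end RoundRobin

/-- identical basestations, arbitrary arrival order: for the
round-robin allocation `RR i = i mod m` (0-indexed version of `1 + (i mod m)`),
every allocation `g` satisfies `TS(g, v) ≤ ⌈n/m⌉ · TS(RR, v)`. -/
theorem stmt2 (n m : ℕ) (hm : 1 ≤ m) (hmn : m ≤ n) (v : Fin n → ℝ)
    (hnn : ∀ i, 0 ≤ v i) (g : Fin n → Fin m) :
    TS g (fun i _ => v i) ≤
      (⌈(n : ℝ) / (m : ℝ)⌉₊ : ℝ) *
        TS (fun i : Fin n => ⟨(i : ℕ) % m, Nat.mod_lt _ (by omega)⟩) (fun i _ => v i) :=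
  (TS_le_sum g hnn).trans <|
    sum_le_mul_TS_of_card_fiber_le (roundRobin hm) hnn (roundRobin_surjective hm hmn)
      fun j => by exact_mod_cast card_roundRobin_fiber_le hm j
end

section
/- Let n ≥ m ≥ 1 and let w : Fin n → Fin m → ℝ be nonnegative weights. Let f* be a max-weight allocation, i.e., for each user i, f*(i) is some index j maximizing w i j. Then for every allocation g : Fin n → Fin m, TS(g, w) ≤ n · TS(f*, w). -/
/-- if `fstar` is a max-weight allocation (each user goes to a basestation
of maximal weight for it), then every allocation `g` satisfies `TS(g,w) ≤ n · TS(fstar,w)`. -/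
theorem stmt4 (n m : ℕ) (hm : 1 ≤ m) (hmn : m ≤ n) (w : Fin n → Fin m → ℝ)
    (hnn : ∀ i j, 0 ≤ w i j) (fstar : Fin n → Fin m)
    (hfstar : ∀ i j, w i j ≤ w i (fstar i)) (g : Fin n → Fin m) :
    TS g w ≤ (n : ℝ) * TS fstar w := by
  have h1 : TS g w ≤ ∑ i, w i (fstar i) := by
    rw [← Finset.sum_fiberwise Finset.univ g (fun i => w i (fstar i))]
    unfold TS
    apply Finset.sum_le_sum
    intro j _
    set s := Finset.univ.filter (fun i => g i = j) with hs
    rcases eq_or_ne s.card 0 with h0 | h0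
    · rw [Finset.card_eq_zero] at h0; simp [h0]
    · have hc : (1:ℝ) ≤ s.card := by exact_mod_cast Nat.one_le_iff_ne_zero.mpr h0
      calc (∑ i ∈ s, w i j) / s.card ≤ ∑ i ∈ s, w i j :=
            div_le_self (Finset.sum_nonneg fun i _ => hnn i j) hc
        _ ≤ ∑ i ∈ s, w i (fstar i) := Finset.sum_le_sum fun i _ => hfstar i j
  have h2 : ∑ i, w i (fstar i) ≤ (n : ℝ) * TS fstar w := by
    rw [← Finset.sum_fiberwise Finset.univ fstar (fun i => w i (fstar i))]
    unfold TS
    rw [Finset.mul_sum]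
    apply Finset.sum_le_sum
    intro j _
    set s := Finset.univ.filter (fun i => fstar i = j) with hs
    have hsum : ∑ i ∈ s, w i (fstar i) = ∑ i ∈ s, w i j := by
      apply Finset.sum_congr rfl
      intro i hi
      have : fstar i = j := by simpa [hs] using hi
      rw [this]
    rw [hsum]
    rcases eq_or_ne s.card 0 with h0 | h0
    · rw [Finset.card_eq_zero] at h0; simp [h0]
    · have hd : (0:ℝ) < s.card := by
        exact_mod_cast Nat.pos_of_ne_zero h0
      have hdn : (s.card:ℝ) ≤ n := by
        have : s.card ≤ n := by
          simpa using (Finset.card_filter_le Finset.univ (fun i => fstar i = j))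
        exact_mod_cast this
      have hSnn : 0 ≤ ∑ i ∈ s, w i j := Finset.sum_nonneg fun i _ => hnn i j
      calc ∑ i ∈ s, w i j = (s.card:ℝ) * ((∑ i ∈ s, w i j) / s.card) := by
            field_simp
        _ ≤ (n:ℝ) * ((∑ i ∈ s, w i j) / s.card) :=
            mul_le_mul_of_nonneg_right hdn (div_nonneg hSnn hd.le)
  exact h1.trans h2
end

section
/- Let w : Fin n → Fin m → ℝ be nonnegative weights. For every allocation f : Fin n → Fin m, the time-sharing utility satisfies TS(f, w) ≤ MWM(w), where MWM(w) is the maximum, over all partial matchings (sets P of user–basestation pairs in which every user appears at most once and every basestation appears at most once), of Σ_{(i,j)∈P} w i j. -/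
open scoped Classical

/-- `P` is a partial matching: no two of its user–basestation pairs share a user or a
basestation. -/
def IsPartialMatching {n m : ℕ} (P : Finset (Fin n × Fin m)) : Prop :=
  ∀ e ∈ P, ∀ e' ∈ P, (e.1 = e'.1 ∨ e.2 = e'.2) → e = e'

/-- Maximum total weight of a partial matching in the complete bipartite graph on
`Fin n` (users) and `Fin m` (basestations) with edge weights `w`. -/
noncomputable def MWM {n m : ℕ} (w : Fin n → Fin m → ℝ) : ℝ :=
  ((Finset.univ : Finset (Finset (Fin n × Fin m))).filter IsPartialMatching).sup'
    ⟨∅, by simp [IsPartialMatching]⟩ (fun P => ∑ e ∈ P, w e.1 e.2)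

/-!
Each basestation `j` contributes the average of `w i j` over its users, which is at most the
weight of its best user. Joining every occupied basestation to its best user gives a partial
matching, whose weight therefore dominates the time-sharing utility.
-/

open Finset
open scoped BigOperators

lemma exists_fiberwise_argmax {α β γ : Type*} [Fintype α] [Nonempty α] [LinearOrder γ]
    (f : α → β) (u : α → γ) : ∃ g : β → α, ∀ i, f (g (f i)) = f i ∧ u i ≤ u (g (f i)) := by
  have h : ∀ j, ∃ k, ∀ i, f i = j → f k = j ∧ u i ≤ u k := by
    intro j
    by_cases hj : ∃ i, f i = j
    · obtain ⟨k, hk, hmax⟩ :=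
        (univ.filter (f · = j)).exists_max_image u (by simpa [Finset.Nonempty] using hj)
      exact ⟨k, fun i hi => ⟨(mem_filter.1 hk).2, hmax i (by simpa using hi)⟩⟩
    · exact ⟨Classical.arbitrary α, fun i hi => (hj ⟨i, hi⟩).elim⟩
  choose g hg using h
  exact ⟨g, fun i => hg (f i) i rfl⟩

lemma isPartialMatching_image_of_injOn {n m : ℕ} {T : Finset (Fin m)} {g : Fin m → Fin n}
    (hg : Set.InjOn g T) : IsPartialMatching (T.image fun j => (g j, j)) := by
  simp only [IsPartialMatching, mem_image]
  rintro _ ⟨j, hj, rfl⟩ _ ⟨j', hj', rfl⟩ (h | h)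
  · rw [hg hj hj' h]
  · obtain rfl : j = j' := h
    rfl

lemma sum_le_MWM {n m : ℕ} (w : Fin n → Fin m → ℝ) {P : Finset (Fin n × Fin m)}
    (hP : IsPartialMatching P) : ∑ e ∈ P, w e.1 e.2 ≤ MWM w :=
  le_sup' (fun Q : Finset (Fin n × Fin m) => ∑ e ∈ Q, w e.1 e.2) (mem_filter.2 ⟨mem_univ _, hP⟩)

lemma TS_le_sum_of_forall_le {n m : ℕ} (f : Fin n → Fin m) (w : Fin n → Fin m → ℝ)
    (g : Fin m → Fin n) (hg : ∀ i, w i (f i) ≤ w (g (f i)) (f i)) :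
    TS f w ≤ ∑ j ∈ univ.image f, w (g j) j := by
  have hTS : TS f w = ∑ j ∈ univ.image f, 𝔼 i ∈ univ.filter (f · = j), w i j := by
    simp only [TS, ← expect_eq_sum_div_card]
    refine (sum_subset (subset_univ _) fun j _ hj => ?_).symm
    have hfiber : ∀ i ∈ univ, ¬f i = j := fun i _ hi => hj (hi ▸ mem_image_of_mem f (mem_univ i))
    rw [filter_false_of_mem hfiber, expect_empty]
  rw [hTS]
  refine sum_le_sum fun j hj => expect_le ?_ ?_
  · obtain ⟨i, -, rfl⟩ := mem_image.1 hj
    exact ⟨i, mem_filter.2 ⟨mem_univ i, rfl⟩⟩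
  · intro i hi
    obtain rfl := (mem_filter.1 hi).2
    exact hg i

theorem stmt6_general (n m : ℕ) (w : Fin n → Fin m → ℝ)
    (f : Fin n → Fin m) :
    TS f w ≤ MWM w := by
  rcases isEmpty_or_nonempty (Fin n) with _ | _
  · simpa [TS] using sum_le_MWM w (P := ∅) (by simp [IsPartialMatching])
  obtain ⟨g, hg⟩ := exists_fiberwise_argmax f fun i => w i (f i)
  have hinj : Set.InjOn g (univ.image f) := by
    simp only [coe_image, coe_univ, Set.image_univ]
    rintro _ ⟨i, rfl⟩ _ ⟨i', rfl⟩ h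
    rw [← (hg i).1, ← (hg i').1, h]
  have hmax : ∀ i, w i (f i) ≤ w (g (f i)) (f i) := fun i => by simpa only [(hg i).1] using (hg i).2
  calc TS f w ≤ ∑ j ∈ univ.image f, w (g j) j := TS_le_sum_of_forall_le f w g hmax
    _ = ∑ e ∈ (univ.image f).image fun j => (g j, j), w e.1 e.2 := by
      rw [sum_image fun _ _ _ _ h => (Prod.ext_iff.1 h).2]
    _ ≤ MWM w := sum_le_MWM w (isPartialMatching_image_of_injOn hinj)

/-- for nonnegative weights, the time-sharing utility of any allocation is
at most the maximum weight of a partial matching. -/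
theorem stmt6 (n m : ℕ) (w : Fin n → Fin m → ℝ) (hnn : ∀ i j, 0 ≤ w i j)
    (f : Fin n → Fin m) :
    TS f w ≤ MWM w :=
  stmt6_general n m w f
end

section
/- Let n ≥ 2 and 1 ≤ r ≤ n−1. For a uniformly random permutation π of {1, …, n}, let E be the event that the position i_n of the maximum value n satisfies i_n > r and that the maximum of π over positions 1, …, i_n − 1 occurs within the first r positions (equivalently: the secretary stopping rule with r test samples selects the overall maximum). Then Pr(E) = (r/n) · Σ_{i=r+1}^n 1/(i−1), and this quantity is strictly greater than (r/n) · ln(n/r). -/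
open scoped Classical

/-!
Condition on the position `i` of the value `t` (the maximum, in the theorem). Among the
permutations with `π i = t`, the position of the largest value before `i` is equidistributed over
the `i` earlier positions, because right multiplication by the transposition of two of them
exchanges the corresponding sets. Hence, for `i ≥ r`, the rule succeeds for a fraction `r / i` of
them, and summing `(1 / n) · (r / i)` over `i = r, …, n - 1` gives the formula. The lower bound
telescopes from `log (1 + 1 / i) < 1 / i`.
-/

open Finset Equiv Nat

theorem card_filter_apply_eq_eq {α : Type*} [Fintype α] [DecidableEq α] (i t t' : α) :
    #{σ : Perm α | σ i = t} = #{σ : Perm α | σ i = t'} :=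
  card_nbij' (swap t t' * ·) (swap t t' * ·)
    (fun σ hσ => by simp_all)
    (fun σ hσ => by simp_all)
    (fun σ _ => by simp [← mul_assoc])
    (fun σ _ => by simp [← mul_assoc])

theorem card_mul_card_filter_apply_eq {α : Type*} [Fintype α] [DecidableEq α] (i t : α) :
    Fintype.card α * #{σ : Perm α | σ i = t} = (Fintype.card α)! := by
  have hfib := card_eq_sum_card_fiberwise (s := (univ : Finset (Perm α))) (t := univ)
    (f := fun σ => σ i) (fun σ _ => mem_univ _)
  rw [Finset.card_univ, Fintype.card_perm] at hfib
  rw [hfib, sum_congr rfl fun t' _ => card_filter_apply_eq_eq i t' t, sum_const,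
    Finset.card_univ, smul_eq_mul]

theorem IsMaxOn.eq_of_injective {α β : Type*} [PartialOrder β] {f : α → β} (hf : f.Injective)
    {s : Set α} {k k' : α} (hk : k ∈ s) (hk' : k' ∈ s) (h : IsMaxOn f s k)
    (h' : IsMaxOn f s k') : k = k' :=
  hf <| le_antisymm (h' hk) (h hk')

theorem forall_exists_le_iff_exists_isMaxOn {α β : Type*} [LinearOrder β] {f : α → β}
    {s : Finset α} (hs : s.Nonempty) {K : Finset α} :
    (∀ j ∈ s, ∃ k ∈ K, f j ≤ f k) ↔ ∃ k ∈ K, IsMaxOn f s k := by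
  constructor
  · intro h
    obtain ⟨m, hm, hmax⟩ := exists_max_image s f hs
    obtain ⟨k, hk, hmk⟩ := h m hm
    exact ⟨k, hk, fun j hj => (hmax j hj).trans hmk⟩
  · rintro ⟨k, hk, hmax⟩ j hj
    exact ⟨k, hk, hmax hj⟩

section Perm

variable {α : Type*} [LinearOrder α]

theorem apply_eq_isMaxOn_mul_swap {i t k k' : α} {s : Finset α} (hi : i ∉ s) (hk : k ∈ s)
    (hk' : k' ∈ s) {σ : Perm α} (h : σ i = t ∧ IsMaxOn σ s k) :
    (σ * swap k k') i = t ∧ IsMaxOn (σ * swap k k') s k' := by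
  refine ⟨?_, h.2.comp_mapsTo (bijOn_swap hk hk').mapsTo (swap_apply_right k k')⟩
  rw [Perm.mul_apply, swap_apply_of_ne_of_ne (ne_of_mem_of_not_mem hk hi).symm
    (ne_of_mem_of_not_mem hk' hi).symm, h.1]

variable [Fintype α]

theorem card_filter_apply_eq_isMaxOn_eq {i t k k' : α} {s : Finset α} (hi : i ∉ s)
    (hk : k ∈ s) (hk' : k' ∈ s) :
    #{σ : Perm α | σ i = t ∧ IsMaxOn σ s k} = #{σ : Perm α | σ i = t ∧ IsMaxOn σ s k'} :=
  card_nbij' (· * swap k k') (· * swap k k')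
    (fun σ hσ => by simpa using apply_eq_isMaxOn_mul_swap hi hk hk' (by simpa using hσ))
    (fun σ hσ => by
      simpa [swap_comm] using apply_eq_isMaxOn_mul_swap hi hk' hk (by simpa using hσ))
    (fun σ _ => by simp [mul_assoc])
    (fun σ _ => by simp [mul_assoc])

theorem card_filter_exists_isMaxOn (P : Perm α → Prop) [DecidablePred P] {s K : Finset α}
    (hK : K ⊆ s) :
    #{σ : Perm α | P σ ∧ ∃ k ∈ K, IsMaxOn σ s k}
      = ∑ k ∈ K, #{σ : Perm α | P σ ∧ IsMaxOn σ s k} := by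
  rw [← card_biUnion]
  · congr 1
    ext σ
    simp only [mem_filter, mem_univ, true_and, mem_biUnion]
    tauto
  · intro k hk k' hk' hne
    simp only [Function.onFun, disjoint_filter]
    exact fun σ _ h h' => hne (h.2.eq_of_injective σ.injective (hK hk) (hK hk') h'.2)

theorem card_mul_card_filter_exists_isMaxOn {i t : α} {s K : Finset α} (hi : i ∉ s)
    (hK : K ⊆ s) :
    #s * #{σ : Perm α | σ i = t ∧ ∃ k ∈ K, IsMaxOn σ s k} = #K * #{σ : Perm α | σ i = t} := by
  obtain rfl | ⟨k₀, hk₀⟩ := s.eq_empty_or_nonempty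
  · simp [subset_empty.mp hK]
  have hcount : ∀ L ⊆ s, #{σ : Perm α | σ i = t ∧ ∃ k ∈ L, IsMaxOn σ s k}
      = #L * #{σ : Perm α | σ i = t ∧ IsMaxOn σ s k₀} := fun L hL => by
    rw [card_filter_exists_isMaxOn _ hL,
      sum_congr rfl fun k hk => card_filter_apply_eq_isMaxOn_eq hi (hL hk) hk₀, sum_const,
      smul_eq_mul]
  have hmax : #{σ : Perm α | σ i = t} = #{σ : Perm α | σ i = t ∧ ∃ k ∈ s, IsMaxOn σ s k} := by
    refine congrArg card (filter_congr fun σ _ => ?_)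
    obtain ⟨m, hm, hm_max⟩ := exists_max_image s σ ⟨k₀, hk₀⟩
    exact ⟨fun h => ⟨h, m, hm, fun j hj => hm_max j hj⟩, And.left⟩
  rw [hmax, hcount K hK, hcount s subset_rfl]
  ring

end Perm

theorem card_filter_apply_eq_max_before {n r : ℕ} (t i : Fin n) (hr : 0 < r) (hri : r ≤ i) :
    n * (i * #{σ : Perm (Fin n) | σ i = t ∧
      ∀ j : Fin n, (j : ℕ) < i → ∃ j' : Fin n, (j' : ℕ) < r ∧ σ j ≤ σ j'}) = r * n ! := by
  have hrn : r < n := hri.trans_lt i.isLt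
  have hs : (Iio i).Nonempty := ⟨⟨0, by omega⟩, by simp [Fin.lt_def]; omega⟩
  have hevent : ∀ σ : Perm (Fin n), (σ i = t ∧
      ∀ j : Fin n, (j : ℕ) < i → ∃ j' : Fin n, (j' : ℕ) < r ∧ σ j ≤ σ j') ↔
      σ i = t ∧ ∃ k ∈ Iio (⟨r, hrn⟩ : Fin n), IsMaxOn σ (Iio i : Finset (Fin n)) k := by
    intro σ
    rw [← forall_exists_le_iff_exists_isMaxOn hs]
    simp only [mem_Iio, Fin.lt_def]
  have hcount := card_mul_card_filter_exists_isMaxOn (t := t) (notMem_Iio_self (b := i))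
    (Iio_subset_Iio (a := (⟨r, hrn⟩ : Fin n)) hri)
  rw [Fin.card_Iio, Fin.card_Iio] at hcount
  have hfiber := card_mul_card_filter_apply_eq i t
  rw [Fintype.card_fin] at hfiber
  calc n * (i * #{σ : Perm (Fin n) | σ i = t ∧
        ∀ j : Fin n, (j : ℕ) < i → ∃ j' : Fin n, (j' : ℕ) < r ∧ σ j ≤ σ j'})
      = n * (r * #{σ : Perm (Fin n) | σ i = t}) := by
        rw [filter_congr fun σ _ => hevent σ]
        -- `hcount` reaches the order of `Fin n` through `LinearOrder`: equal only up to instances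
        convert congrArg (n * ·) hcount
    _ = r * n ! := by rw [mul_left_comm, hfiber]

theorem card_filter_apply_eq_max_before_div_factorial {n r : ℕ} (t i : Fin n) (hr : 0 < r)
    (hri : r ≤ i) :
    (#{σ : Perm (Fin n) | σ i = t ∧
      ∀ j : Fin n, (j : ℕ) < i → ∃ j' : Fin n, (j' : ℕ) < r ∧ σ j ≤ σ j'} : ℝ) / n !
      = r / (n * i) := by
  have hcount := card_filter_apply_eq_max_before t i hr hri
  have hi : (0 : ℝ) < i := by exact_mod_cast hr.trans_le hri
  have hn : (0 : ℝ) < n := by exact_mod_cast (hr.trans_le hri).trans i.isLt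
  have hcountℝ := congrArg (Nat.cast : ℕ → ℝ) hcount
  simp only [Nat.cast_mul] at hcountℝ
  rw [div_eq_div_iff (by positivity) (by positivity)]
  linarith

theorem sum_fin_filter_le_eq_sum_Ico {M : Type*} [AddCommMonoid M] {n : ℕ} (r : ℕ)
    (f : ℕ → M) :
    ∑ i ∈ ({i : Fin n | r ≤ (i : ℕ)} : Finset (Fin n)), f i = ∑ i ∈ Ico r n, f i := by
  rw [sum_filter, Fin.sum_univ_eq_sum_range (fun i => if r ≤ i then f i else 0), ← sum_filter]
  congr 1
  ext i
  simp only [mem_filter, mem_range, mem_Ico]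
  omega

theorem card_filter_secretary_div_factorial {n r : ℕ} (t : Fin n) (hr : 0 < r) :
    (#{π : Perm (Fin n) | r ≤ (π.symm t : ℕ) ∧
      ∀ j : Fin n, (j : ℕ) < π.symm t → ∃ j' : Fin n, (j' : ℕ) < r ∧ π j ≤ π j'} : ℝ) / n !
      = r / n * ∑ i ∈ Ico r n, 1 / (i : ℝ) := by
  rw [card_eq_sum_card_fiberwise (f := fun π => π.symm t) (t := {i : Fin n | r ≤ (i : ℕ)})
    (fun π hπ => by simp_all)]
  push_cast
  rw [sum_div, mul_sum, ← sum_fin_filter_le_eq_sum_Ico r]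
  refine sum_congr rfl fun i hi => ?_
  have hri : r ≤ (i : ℕ) := (mem_filter.mp hi).2
  have hfiber : ∀ π : Perm (Fin n), ((r ≤ (π.symm t : ℕ) ∧
      ∀ j : Fin n, (j : ℕ) < π.symm t → ∃ j' : Fin n, (j' : ℕ) < r ∧ π j ≤ π j') ∧ π.symm t = i)
      ↔ (π i = t ∧ ∀ j : Fin n, (j : ℕ) < i → ∃ j' : Fin n, (j' : ℕ) < r ∧ π j ≤ π j') := by
    intro π
    constructor
    · rintro ⟨⟨-, h⟩, rfl⟩
      exact ⟨π.apply_symm_apply t, h⟩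
    · rintro ⟨rfl, h⟩
      rw [π.symm_apply_apply]
      exact ⟨⟨hri, h⟩, rfl⟩
  rw [filter_filter, filter_congr fun π _ => hfiber π,
    card_filter_apply_eq_max_before_div_factorial t i hr hri, mul_one_div, div_div]

theorem log_div_lt_sum_Ico_one_div {n r : ℕ} (hr : 0 < r) (hrn : r < n) :
    Real.log (n / r) < ∑ i ∈ Ico r n, 1 / (i : ℝ) := by
  have hlog : ∀ i : ℕ, 0 < i → Real.log (i + 1) - Real.log i < 1 / i := fun i hi => by
    have hi : (0 : ℝ) < i := by exact_mod_cast hi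
    rw [← Real.log_div (by positivity) hi.ne']
    calc Real.log ((i + 1) / i) < (i + 1) / i - 1 :=
          Real.log_lt_sub_one_of_pos (by positivity)
            (by rw [Ne, div_eq_one_iff_eq hi.ne']; linarith)
      _ = 1 / i := by field_simp; ring
  have htel := sum_Ico_sub (fun i : ℕ => Real.log i) hrn.le
  push_cast at htel
  have hr' : (0 : ℝ) < r := by exact_mod_cast hr
  have hn' : (0 : ℝ) < n := by exact_mod_cast hr.trans hrn
  rw [Real.log_div hn'.ne' hr'.ne', ← htel]
  exact sum_lt_sum_of_nonempty (nonempty_Ico.mpr hrn) fun i hi =>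
    hlog i (hr.trans_le (mem_Ico.mp hi).1)

theorem sum_Icc_one_div_sub_one_eq_sum_Ico (r n : ℕ) :
    ∑ i ∈ Icc (r + 1) n, 1 / ((i : ℝ) - 1) = ∑ i ∈ Ico r n, 1 / (i : ℝ) := by
  rw [← Ico_add_one_right_eq_Icc, ← sum_Ico_add' (fun i : ℕ => 1 / ((i : ℝ) - 1))]
  push_cast
  simp

/-- secretary stopping rule. For a uniformly random permutation `π` of
`Fin n` (position `i` carries value `π i`; positions and values are 0-indexed, so the
paper's 1-indexed position/value `k` is index `k-1`, and the maximum value is `n-1`),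
let `E` be the event that the position `i*` of the maximum value satisfies `i* > r`
(1-indexed), i.e. `r ≤ i*` (0-indexed), and that the maximum of `π` over the positions
strictly before `i*` is attained within the first `r` positions. Then
`Pr(E) = (r/n) · Σ_{i=r+1}^n 1/(i-1) > (r/n) · ln (n/r)`. -/
theorem stmt7 (n r : ℕ) (hr : 1 ≤ r) (hrn : r ≤ n - 1) :
    (((Finset.univ.filter (fun π : Equiv.Perm (Fin n) =>
        r ≤ ((π.symm ⟨n - 1, by omega⟩ : Fin n) : ℕ) ∧
        ∀ j : Fin n, (j : ℕ) < ((π.symm ⟨n - 1, by omega⟩ : Fin n) : ℕ) →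
          ∃ j' : Fin n, (j' : ℕ) < r ∧ π j ≤ π j')).card : ℝ) / (Nat.factorial n : ℝ)
      = ((r : ℝ) / (n : ℝ)) * ∑ i ∈ Finset.Icc (r + 1) n, 1 / ((i : ℝ) - 1))
    ∧ ((r : ℝ) / (n : ℝ)) * Real.log ((n : ℝ) / (r : ℝ))
      < ((r : ℝ) / (n : ℝ)) * ∑ i ∈ Finset.Icc (r + 1) n, 1 / ((i : ℝ) - 1) := by
  have hrn' : r < n := by omega
  have hn : 0 < n := by omega
  have hrn_div_pos : (0 : ℝ) < r / n := div_pos (by exact_mod_cast hr) (by exact_mod_cast hn)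
  rw [sum_Icc_one_div_sub_one_eq_sum_Ico]
  exact ⟨card_filter_secretary_div_factorial _ hr,
    mul_lt_mul_of_pos_left (log_div_lt_sum_Ico_one_div hr hrn') hrn_div_pos⟩
end

section
/- Let m ≥ 2, r ≥ m−1, n > r, and 0 ≤ d ≤ n − r. For a uniformly random permutation π of {1, …, n}, define for each position i the relative rank p(i) = |{j ≤ i : π(j) ≥ π(i)}|, and let S = |{i : r < i ≤ n, p(i) ≤ m−1}|. Then Pr(S = d) = [r(r−1)⋯(r−m+2) / (n(n−1)⋯(n−m+2))] · (m−1)^d · Σ_{r+1 ≤ i_1 < ⋯ < i_d ≤ n} ∏_{ℓ=1}^d 1/(i_ℓ − m + 1). -/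
open scoped Classical
open Finset


noncomputable def rk {n : ℕ} (π : Equiv.Perm (Fin n)) (i : Fin n) : ℕ :=
  (Finset.univ.filter (fun j : Fin n => j ≤ i ∧ π i ≤ π j)).card

lemma rk_pos {n : ℕ} (π : Equiv.Perm (Fin n)) (i : Fin n) : 1 ≤ rk π i := by
  rw [rk]
  exact Finset.card_pos.2 ⟨i, by simp⟩

lemma rk_le {n : ℕ} (π : Equiv.Perm (Fin n)) (i : Fin n) : rk π i ≤ i.val + 1 := by
  rw [rk, ← Fin.card_Iic i]
  apply Finset.card_le_card
  intro j hj
  simp only [Finset.mem_filter] at hj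
  exact Finset.mem_Iic.2 hj.2.1

lemma comp_iff {n : ℕ} (π σ : Equiv.Perm (Fin n)) (h : ∀ i, rk π i = rk σ i) :
    ∀ N : ℕ, ∀ i j : Fin n, i.val ≤ N → j.val ≤ N → (π i ≤ π j ↔ σ i ≤ σ j) := by
  intro N
  induction N with
  | zero =>
    intro i j hi hj
    have : i = j := Fin.ext (by omega)
    subst this; simp
  | succ N IH =>
    have key : ∀ k l : Fin n, k.val = N+1 → l.val ≤ N → (π k ≤ π l ↔ σ k ≤ σ l) := by
      intro k l hk hl
      set Tπ := Finset.univ.filter (fun j : Fin n => j.val ≤ N ∧ π k ≤ π j) with hTπ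
      set Tσ := Finset.univ.filter (fun j : Fin n => j.val ≤ N ∧ σ k ≤ σ j) with hTσ
      have hsplit : ∀ (τ : Equiv.Perm (Fin n)),
          (Finset.univ.filter (fun j : Fin n => j ≤ k ∧ τ k ≤ τ j))
          = insert k (Finset.univ.filter (fun j : Fin n => j.val ≤ N ∧ τ k ≤ τ j)) := by
        intro τ
        ext j
        simp only [Finset.mem_filter, Finset.mem_insert, Finset.mem_univ, true_and]
        constructor
        · rintro ⟨hjk, hτ⟩
          rcases eq_or_ne j k with rfl | hne
          · exact Or.inl rfl
          · right
            refine ⟨?_, hτ⟩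
            have : j.val ≤ k.val := hjk
            have : j.val ≠ k.val := fun hv => hne (Fin.ext hv)
            omega
        · rintro (rfl | ⟨hjN, hτ⟩)
          · exact ⟨le_refl _, le_refl _⟩
          · exact ⟨Fin.le_def.2 (by omega), hτ⟩
      have hknotπ : k ∉ Tπ := by simp [hTπ]; omega
      have hknotσ : k ∉ Tσ := by simp [hTσ]; omega
      have hcard : Tπ.card = Tσ.card := by
        have h1 := h k
        rw [rk, rk, hsplit π, hsplit σ, Finset.card_insert_of_notMem hknotπ,
          Finset.card_insert_of_notMem hknotσ] at h1
        omega
      have hR : ∀ j : Fin n, j.val ≤ N →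
          (Finset.univ.filter (fun l : Fin n => l.val ≤ N ∧ π j ≤ π l)).card
          = (Finset.univ.filter (fun l : Fin n => l.val ≤ N ∧ σ j ≤ σ l)).card := by
        intro j hj
        congr 1
        apply Finset.filter_congr
        intro l _
        exact and_congr_right fun hlN => IH j l hj hlN
      have charac : ∀ (τ : Equiv.Perm (Fin n)) (T : Finset (Fin n)),
          T = Finset.univ.filter (fun j : Fin n => j.val ≤ N ∧ τ k ≤ τ j) →
          ∀ j : Fin n, j ∈ T ↔ (j.val ≤ N ∧
            (Finset.univ.filter (fun l : Fin n => l.val ≤ N ∧ τ j ≤ τ l)).card ≤ T.card) := by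
        rintro τ T rfl j
        constructor
        · intro hj
          simp only [Finset.mem_filter, Finset.mem_univ, true_and] at hj
          refine ⟨hj.1, Finset.card_le_card ?_⟩
          intro l hl
          simp only [Finset.mem_filter, Finset.mem_univ, true_and] at hl ⊢
          exact ⟨hl.1, le_trans hj.2 hl.2⟩
        · rintro ⟨hjN, hcount⟩
          simp only [Finset.mem_filter, Finset.mem_univ, true_and]
          refine ⟨hjN, ?_⟩
          by_contra hnot
          have hlt : τ j < τ k := lt_of_not_ge hnot
          have hsub : insert j (Finset.univ.filter (fun l : Fin n => l.val ≤ N ∧ τ k ≤ τ l))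
              ⊆ Finset.univ.filter (fun l : Fin n => l.val ≤ N ∧ τ j ≤ τ l) := by
            intro l hl
            simp only [Finset.mem_insert, Finset.mem_filter, Finset.mem_univ, true_and] at hl ⊢
            rcases hl with rfl | ⟨hlN, hτ⟩
            · exact ⟨hjN, le_refl _⟩
            · exact ⟨hlN, le_trans hlt.le hτ⟩
          have hjnot : j ∉ Finset.univ.filter (fun l : Fin n => l.val ≤ N ∧ τ k ≤ τ l) := by
            simp only [Finset.mem_filter, Finset.mem_univ, true_and, not_and]
            intro _; exact hnot
          have := Finset.card_le_card hsub
          rw [Finset.card_insert_of_notMem hjnot] at this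
          omega
      have hT : Tπ = Tσ := by
        ext j
        rw [charac π Tπ hTπ j, charac σ Tσ hTσ j]
        constructor
        · rintro ⟨hjN, hc⟩
          exact ⟨hjN, by rw [← hR j hjN]; omega⟩
        · rintro ⟨hjN, hc⟩
          exact ⟨hjN, by rw [hR j hjN]; omega⟩
      have hl1 : l ∈ Tπ ↔ l ∈ Tσ := by rw [hT]
      simp only [hTπ, hTσ, Finset.mem_filter, Finset.mem_univ, true_and] at hl1
      constructor
      · intro hle; exact (hl1.1 ⟨hl, hle⟩).2
      · intro hle; exact (hl1.2 ⟨hl, hle⟩).2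
    intro i j hi hj
    rcases eq_or_ne i j with rfl | hij
    · simp
    rcases Nat.lt_or_ge i.val (N+1) with hiN | hiN
    · rcases Nat.lt_or_ge j.val (N+1) with hjN | hjN
      · exact IH i j (by omega) (by omega)
      · -- j.val = N + 1
        have hjv : j.val = N + 1 := by omega
        have hk := key j i hjv (by omega)
        have hπ : π i ≠ π j := fun hc => hij (π.injective hc)
        have hσ : σ i ≠ σ j := fun hc => hij (σ.injective hc)
        constructor
        · intro hle
          by_contra hnot
          have : σ j ≤ σ i := le_of_not_ge hnot
          have : π j ≤ π i := hk.2 this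
          exact hπ (le_antisymm hle this)
        · intro hle
          by_contra hnot
          have : π j ≤ π i := le_of_not_ge hnot
          have : σ j ≤ σ i := hk.1 this
          exact hσ (le_antisymm hle this)
    · have hiv : i.val = N + 1 := by omega
      have hjN : j.val ≤ N := by
        rcases Nat.lt_or_ge j.val (N+1) with h' | h'
        · omega
        · exfalso; exact hij (Fin.ext (by omega))
      exact key i j hiv hjN

lemma rk_injective {n : ℕ} (π σ : Equiv.Perm (Fin n)) (h : ∀ i, rk π i = rk σ i) : π = σ := by
  rcases Nat.eq_zero_or_pos n with rfl | hn
  · exact Subsingleton.elim _ _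
  have hcomp : ∀ i j : Fin n, π i ≤ π j ↔ σ i ≤ σ j := by
    intro i j
    exact comp_iff π σ h (n-1) i j (by have := i.isLt; omega) (by have := j.isLt; omega)
  have hval : ∀ (τ : Equiv.Perm (Fin n)) (i : Fin n),
      (Finset.univ.filter (fun j : Fin n => τ j ≤ τ i)).card = (τ i).val + 1 := by
    intro τ i
    rw [← Fin.card_Iic (τ i)]
    apply Finset.card_bij (fun j _ => τ j)
    · intro j hj
      simp only [Finset.mem_filter, Finset.mem_univ, true_and] at hj
      exact Finset.mem_Iic.2 hj
    · intro a ha b hb hab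
      exact τ.injective hab
    · intro v hv
      refine ⟨τ.symm v, ?_, by simp⟩
      simp only [Finset.mem_filter, Finset.mem_univ, true_and, Equiv.apply_symm_apply]
      exact Finset.mem_Iic.1 hv
  apply Equiv.ext
  intro i
  have h1 := hval π i
  have h2 := hval σ i
  have hfeq : (Finset.univ.filter (fun j : Fin n => π j ≤ π i))
      = (Finset.univ.filter (fun j : Fin n => σ j ≤ σ i)) := by
    apply Finset.filter_congr
    intro j _
    exact hcomp j i
  apply Fin.ext
  rw [hfeq] at h1
  omega

section
variable {n : ℕ}

noncomputable def code (π : Equiv.Perm (Fin n)) : ∀ i : Fin n, Fin (i.val + 1) :=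
  fun i => ⟨rk π i - 1, by have h1 := rk_pos π i; have h2 := rk_le π i; omega⟩

lemma code_bijective : Function.Bijective (code (n := n)) := by
  rw [Fintype.bijective_iff_injective_and_card]
  refine ⟨?_, ?_⟩
  · intro π σ hc
    apply rk_injective
    intro i
    have h1 := congrArg Fin.val (congrFun hc i)
    simp only [code] at h1
    have h2 := rk_pos π i
    have h3 := rk_pos σ i
    omega
  · rw [Fintype.card_perm, Fintype.card_pi, Fintype.card_fin]
    simp only [Fintype.card_fin]
    rw [Fin.prod_univ_eq_prod_range (fun i => i + 1) n]
    exact (Finset.prod_range_add_one_eq_factorial n).symm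

lemma fin_card_lt (N c : ℕ) :
    ((univ : Finset (Fin N)).filter (fun x : Fin N => (x : ℕ) < c)).card = min c N := by
  rcases Nat.lt_or_ge c N with h | h
  · have : (univ : Finset (Fin N)).filter (fun x : Fin N => (x : ℕ) < c) = Finset.Iio (⟨c, h⟩ : Fin N) := by
      ext x; simp [Fin.lt_def]
    rw [this, Fin.card_Iio]
    simp only [Fin.val_mk]
    omega
  · have : (univ : Finset (Fin N)).filter (fun x : Fin N => (x : ℕ) < c) = univ := by
      ext x; simp; omega
    rw [this, Finset.card_univ, Fintype.card_fin]
    omega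

lemma transfer (m r d : ℕ) (hm : 2 ≤ m) :
    ((univ : Finset (Equiv.Perm (Fin n))).filter (fun π =>
      (univ.filter (fun i : Fin n => r ≤ (i : ℕ) ∧ rk π i ≤ m - 1)).card = d)).card
    = ((univ : Finset (∀ i : Fin n, Fin (i.val + 1))).filter (fun f =>
      (univ.filter (fun i : Fin n => r ≤ (i : ℕ) ∧ ((f i) : ℕ) < m - 1)).card = d)).card := by
  apply Finset.card_bij (fun π _ => code π)
  · intro π hπ
    simp only [Finset.mem_filter, Finset.mem_univ, true_and] at hπ ⊢
    rw [← hπ]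
    congr 1
    apply Finset.filter_congr
    intro i _
    have h1 := rk_pos π i
    have : ((code π i) : ℕ) = rk π i - 1 := rfl
    rw [this]
    constructor
    · rintro ⟨h2, h3⟩; exact ⟨h2, by omega⟩
    · rintro ⟨h2, h3⟩; exact ⟨h2, by omega⟩
  · intro a _ b _ hab
    exact code_bijective.1 hab
  · intro f hf
    obtain ⟨π, hπ⟩ := code_bijective.2 f
    refine ⟨π, ?_, hπ⟩
    simp only [Finset.mem_filter, Finset.mem_univ, true_and] at hf ⊢
    rw [← hf]
    subst hπ
    congr 1
    apply Finset.filter_congr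
    intro i _
    have h1 := rk_pos π i
    have : ((code π i) : ℕ) = rk π i - 1 := rfl
    rw [this]
    constructor
    · rintro ⟨h2, h3⟩; exact ⟨h2, by omega⟩
    · rintro ⟨h2, h3⟩; exact ⟨h2, by omega⟩

lemma pi_count (m r d : ℕ) (hm : 2 ≤ m) (hr : m - 1 ≤ r) :
    ((univ : Finset (∀ i : Fin n, Fin (i.val + 1))).filter (fun f =>
      (univ.filter (fun i : Fin n => r ≤ (i : ℕ) ∧ ((f i) : ℕ) < m - 1)).card = d)).card
    = ∑ A ∈ ((univ : Finset (Fin n)).filter (fun i : Fin n => r ≤ (i : ℕ))).powersetCard d,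
        ∏ i : Fin n, (if i ∈ A then m - 1 else (i.val + 1 - (if r ≤ (i : ℕ) then m - 1 else 0))) := by
  set T := (univ : Finset (Fin n)).filter (fun i : Fin n => r ≤ (i : ℕ)) with hT
  set F := fun f : (∀ i : Fin n, Fin (i.val + 1)) =>
    univ.filter (fun i : Fin n => r ≤ (i : ℕ) ∧ ((f i) : ℕ) < m - 1) with hF
  have hmem : ∀ f ∈ (univ : Finset (∀ i : Fin n, Fin (i.val + 1))).filter (fun f =>
      (univ.filter (fun i : Fin n => r ≤ (i : ℕ) ∧ ((f i) : ℕ) < m - 1)).card = d),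
      F f ∈ T.powersetCard d := by
    intro f hf
    simp only [Finset.mem_filter, Finset.mem_univ, true_and] at hf
    rw [Finset.mem_powersetCard]
    refine ⟨?_, hf⟩
    intro i hi
    simp only [hF, hT, Finset.mem_filter, Finset.mem_univ, true_and] at hi ⊢
    exact hi.1
  rw [Finset.card_eq_sum_card_fiberwise hmem]
  apply Finset.sum_congr rfl
  intro A hA
  rw [Finset.mem_powersetCard] at hA
  have hfib : ((univ : Finset (∀ i : Fin n, Fin (i.val + 1))).filter (fun f =>
      (F f).card = d)).filter (fun f => F f = A)
      = Fintype.piFinset (fun i : Fin n =>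
          (univ : Finset (Fin (i.val + 1))).filter
            (fun x : Fin (i.val+1) => (i ∈ A ↔ (r ≤ (i : ℕ) ∧ (x : ℕ) < m - 1)))) := by
    ext f
    simp only [Finset.mem_filter, Finset.mem_univ, true_and, Fintype.mem_piFinset]
    constructor
    · rintro ⟨hcard, hFA⟩ i
      subst hFA
      simp only [hF, Finset.mem_filter, Finset.mem_univ, true_and]
    · intro hi
      have hFA : F f = A := by
        ext i
        have := hi i
        simp only [hF, Finset.mem_filter, Finset.mem_univ, true_and]
        exact this.symm
      exact ⟨by rw [hFA]; exact hA.2, hFA⟩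
  rw [hfib, Fintype.card_piFinset]
  apply Finset.prod_congr rfl
  intro i _
  by_cases hiA : i ∈ A
  · have hir : r ≤ (i : ℕ) := by
      have := hA.1 hiA
      simp only [hT, Finset.mem_filter, Finset.mem_univ, true_and] at this
      exact this
    have hpred : ∀ x ∈ (univ : Finset (Fin (i.val + 1))),
        ((i ∈ A ↔ (r ≤ (i : ℕ) ∧ (x : ℕ) < m - 1)) ↔ ((x : ℕ) < m - 1)) := by
      intro x _; simp [hiA, hir]
    rw [Finset.filter_congr hpred, fin_card_lt, if_pos hiA]
    omega
  · by_cases hir : r ≤ (i : ℕ)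
    · have hpred : ∀ x ∈ (univ : Finset (Fin (i.val + 1))),
          ((i ∈ A ↔ (r ≤ (i : ℕ) ∧ (x : ℕ) < m - 1)) ↔ ¬ ((x : ℕ) < m - 1)) := by
        intro x _; simp [hiA, hir]
      rw [Finset.filter_congr hpred, Finset.filter_not,
        Finset.card_sdiff_of_subset (Finset.filter_subset _ _), Finset.card_univ, Fintype.card_fin,
        fin_card_lt, if_neg hiA, if_pos hir]
      have : m - 1 ≤ i.val + 1 := by omega
      omega
    · have hpred : ∀ x ∈ (univ : Finset (Fin (i.val + 1))),
          ((i ∈ A ↔ (r ≤ (i : ℕ) ∧ (x : ℕ) < m - 1)) ↔ True) := by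
        intro x _; simp [hiA, hir]
      rw [Finset.filter_congr hpred, if_neg hiA, if_neg hir]
      simp
end


lemma prod_id_nat (m r n : ℕ) (hm : 2 ≤ m) (hr : m - 1 ≤ r) (hrn : r < n) :
    (∏ i ∈ Finset.Ico r n, (i + 2 - m)) * (∏ k ∈ Finset.range (m-1), (n - k))
    = (∏ k ∈ Finset.range (m-1), (r - k)) * (∏ i ∈ Finset.Ico r n, (i + 1)) := by
  have h1 : ∏ i ∈ Finset.Ico r n, (i + 2 - m) = ∏ j ∈ Finset.Ico (r+2-m) (n+2-m), j := by
    rw [Finset.prod_Ico_eq_prod_range, Finset.prod_Ico_eq_prod_range]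
    have he : n + 2 - m - (r + 2 - m) = n - r := by omega
    rw [he]
    apply Finset.prod_congr rfl
    intro i _
    omega
  have h2 : ∏ k ∈ Finset.range (m-1), (n - k) = ∏ j ∈ Finset.Ico (n+2-m) (n+1), j := by
    rw [Finset.prod_Ico_eq_prod_range]
    have he : n + 1 - (n + 2 - m) = m - 1 := by omega
    rw [he, ← Finset.prod_range_reflect]
    apply Finset.prod_congr rfl
    intro i hi
    rw [Finset.mem_range] at hi
    omega
  have h3 : ∏ k ∈ Finset.range (m-1), (r - k) = ∏ j ∈ Finset.Ico (r+2-m) (r+1), j := by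
    rw [Finset.prod_Ico_eq_prod_range]
    have he : r + 1 - (r + 2 - m) = m - 1 := by omega
    rw [he, ← Finset.prod_range_reflect]
    apply Finset.prod_congr rfl
    intro i hi
    rw [Finset.mem_range] at hi
    omega
  have h4 : ∏ i ∈ Finset.Ico r n, (i + 1) = ∏ j ∈ Finset.Ico (r+1) (n+1), j := by
    rw [Finset.prod_Ico_eq_prod_range, Finset.prod_Ico_eq_prod_range]
    have he : n + 1 - (r + 1) = n - r := by omega
    rw [he]
    apply Finset.prod_congr rfl
    intro i _
    omega
  rw [h1, h2, h3, h4, Finset.prod_Ico_consecutive _ (by omega) (by omega),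
    Finset.prod_Ico_consecutive _ (by omega) (by omega)]

lemma C_eq (m r n : ℕ) (hm : 2 ≤ m) (hr : m - 1 ≤ r) (hrn : r < n) :
    ∏ i ∈ Finset.Ico r n, (((i:ℝ) + 2 - (m:ℝ)) / ((i:ℝ) + 1))
    = (∏ k ∈ Finset.range (m-1), ((r:ℝ) - (k:ℝ)))
      / (∏ k ∈ Finset.range (m-1), ((n:ℝ) - (k:ℝ))) := by
  have c1 : ∏ i ∈ Finset.Ico r n, ((i:ℝ) + 2 - (m:ℝ)) = ((∏ i ∈ Finset.Ico r n, (i + 2 - m) : ℕ) : ℝ) := by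
    rw [Nat.cast_prod]
    apply Finset.prod_congr rfl
    intro i hi
    rw [Finset.mem_Ico] at hi
    have : m ≤ i + 2 := by omega
    push_cast [this]
    ring
  have c2 : ∏ k ∈ Finset.range (m-1), ((n:ℝ) - (k:ℝ)) = ((∏ k ∈ Finset.range (m-1), (n - k) : ℕ) : ℝ) := by
    rw [Nat.cast_prod]
    apply Finset.prod_congr rfl
    intro k hk
    rw [Finset.mem_range] at hk
    have : k ≤ n := by omega
    push_cast [this]
    ring
  have c3 : ∏ k ∈ Finset.range (m-1), ((r:ℝ) - (k:ℝ)) = ((∏ k ∈ Finset.range (m-1), (r - k) : ℕ) : ℝ) := by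
    rw [Nat.cast_prod]
    apply Finset.prod_congr rfl
    intro k hk
    rw [Finset.mem_range] at hk
    have : k ≤ r := by omega
    push_cast [this]
    ring
  have c4 : ∏ i ∈ Finset.Ico r n, ((i:ℝ) + 1) = ((∏ i ∈ Finset.Ico r n, (i + 1) : ℕ) : ℝ) := by
    push_cast
    rfl
  have hne1 : ∏ i ∈ Finset.Ico r n, ((i:ℝ) + 1) ≠ 0 := by
    apply Finset.prod_ne_zero_iff.2
    intro i _
    positivity
  have hne2 : ∏ k ∈ Finset.range (m-1), ((n:ℝ) - (k:ℝ)) ≠ 0 := by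
    apply Finset.prod_ne_zero_iff.2
    intro k hk
    rw [Finset.mem_range] at hk
    have : (k:ℝ) < (n:ℝ) := by
      have : k < n := by omega
      exact_mod_cast this
    intro hc
    linarith
  rw [Finset.prod_div_distrib, div_eq_div_iff hne1 hne2, c1, c2, c3, c4]
  rw [← Nat.cast_mul, ← Nat.cast_mul]
  exact_mod_cast prod_id_nat m r n hm hr hrn


lemma sum_reindex (n m r d : ℕ) (hrn : r < n) :
    ∑ A ∈ ((univ : Finset (Fin n)).filter (fun i : Fin n => r ≤ (i : ℕ))).powersetCard d,
      ∏ i ∈ A, (1 / ((i : ℕ) + 1 - (m:ℝ) + 1))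
    = ∑ B ∈ (Finset.Icc (r + 1) n).powersetCard d,
        ∏ j ∈ B, 1 / ((j : ℝ) - (m : ℝ) + 1) := by
  have hinj : Function.Injective (fun x : Fin n => (x : ℕ) + 1) := by
    intro a b hab
    simp only [add_left_inj] at hab
    exact Fin.ext hab
  apply Finset.sum_bij (fun A _ => A.image (fun x : Fin n => (x : ℕ) + 1))
  · intro A hA
    rw [Finset.mem_powersetCard] at hA ⊢
    constructor
    · intro j hj
      rw [Finset.mem_image] at hj
      obtain ⟨x, hx, rfl⟩ := hj
      have := hA.1 hx
      simp only [Finset.mem_filter, Finset.mem_univ, true_and] at this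
      rw [Finset.mem_Icc]
      exact ⟨by omega, by have := x.isLt; omega⟩
    · rw [Finset.card_image_of_injective _ hinj]
      exact hA.2
  · intro A hA B hB hAB
    ext x
    constructor
    · intro hx
      have : (x : ℕ) + 1 ∈ B.image (fun x : Fin n => (x : ℕ) + 1) := by
        rw [← hAB]
        exact Finset.mem_image_of_mem _ hx
      rw [Finset.mem_image] at this
      obtain ⟨y, hy, hyx⟩ := this
      rwa [hinj hyx] at hy
    · intro hx
      have : (x : ℕ) + 1 ∈ A.image (fun x : Fin n => (x : ℕ) + 1) := by
        rw [hAB]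
        exact Finset.mem_image_of_mem _ hx
      rw [Finset.mem_image] at this
      obtain ⟨y, hy, hyx⟩ := this
      rwa [hinj hyx] at hy
  · intro B hB
    rw [Finset.mem_powersetCard] at hB
    refine ⟨(univ : Finset (Fin n)).filter (fun x : Fin n => (x : ℕ) + 1 ∈ B), ?_, ?_⟩
    · rw [Finset.mem_powersetCard]
      have himg : ((univ : Finset (Fin n)).filter (fun x : Fin n => (x : ℕ) + 1 ∈ B)).image
          (fun x : Fin n => (x : ℕ) + 1) = B := by
        ext j
        rw [Finset.mem_image]
        constructor
        · rintro ⟨x, hx, rfl⟩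
          simp only [Finset.mem_filter, Finset.mem_univ, true_and] at hx
          exact hx
        · intro hj
          have hj' := hB.1 hj
          rw [Finset.mem_Icc] at hj'
          refine ⟨⟨j - 1, by omega⟩, ?_, by simp; omega⟩
          simp only [Finset.mem_filter, Finset.mem_univ, true_and]
          have : j - 1 + 1 = j := by omega
          simpa [this]
      constructor
      · intro x hx
        simp only [Finset.mem_filter, Finset.mem_univ, true_and] at hx ⊢
        have := hB.1 hx
        rw [Finset.mem_Icc] at this
        omega
      · have hc := Finset.card_image_of_injective
          ((univ : Finset (Fin n)).filter (fun x : Fin n => (x : ℕ) + 1 ∈ B)) hinj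
        rw [himg] at hc
        rw [← hc, hB.2]
    · ext j
      rw [Finset.mem_image]
      constructor
      · rintro ⟨x, hx, rfl⟩
        simp only [Finset.mem_filter, Finset.mem_univ, true_and] at hx
        exact hx
      · intro hj
        have hj' := hB.1 hj
        rw [Finset.mem_Icc] at hj'
        refine ⟨⟨j - 1, by omega⟩, ?_, by simp; omega⟩
        simp only [Finset.mem_filter, Finset.mem_univ, true_and]
        have : j - 1 + 1 = j := by omega
        simpa [this]
  · intro A hA
    rw [Finset.prod_image (fun x _ y _ h => hinj h)]
    apply Finset.prod_congr rfl
    intro x _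
    push_cast
    ring


/-- for a uniformly random permutation `π` of `Fin n` (position `i` carries
value `π i`; 0-indexed, so the paper's 1-indexed position `k` is index `k-1`), define the
relative rank `p(i) = |{j ≤ i : π j ≥ π i}|` and let
`S = |{i : r < i ≤ n (1-indexed), p(i) ≤ m-1}|`. Then for `m ≥ 2`, `m-1 ≤ r < n`,
`0 ≤ d ≤ n - r`:
`Pr(S = d) = [r(r-1)⋯(r-m+2) / (n(n-1)⋯(n-m+2))] · (m-1)^d ·
  Σ_{r+1 ≤ i₁ < ⋯ < i_d ≤ n} ∏_ℓ 1/(i_ℓ - m + 1)`. -/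
theorem stmt9 (n m r d : ℕ) (hm : 2 ≤ m) (hr : m - 1 ≤ r) (hrn : r < n) (hd : d ≤ n - r) :
    ((Finset.univ.filter (fun π : Equiv.Perm (Fin n) =>
        (Finset.univ.filter (fun i : Fin n =>
          r ≤ (i : ℕ) ∧
          (Finset.univ.filter (fun j : Fin n => j ≤ i ∧ π i ≤ π j)).card ≤ m - 1)).card
        = d)).card : ℝ) / (Nat.factorial n : ℝ)
    = ((∏ k ∈ Finset.range (m - 1), ((r : ℝ) - (k : ℝ)))
        / (∏ k ∈ Finset.range (m - 1), ((n : ℝ) - (k : ℝ))))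
      * ((m : ℝ) - 1) ^ d
      * ∑ A ∈ (Finset.Icc (r + 1) n).powersetCard d,
          ∏ i ∈ A, 1 / ((i : ℝ) - (m : ℝ) + 1) := by
  have hcard : (Finset.univ.filter (fun π : Equiv.Perm (Fin n) =>
        (Finset.univ.filter (fun i : Fin n =>
          r ≤ (i : ℕ) ∧
          (Finset.univ.filter (fun j : Fin n => j ≤ i ∧ π i ≤ π j)).card ≤ m - 1)).card
        = d)).card
      = ∑ A ∈ ((univ : Finset (Fin n)).filter (fun i : Fin n => r ≤ (i : ℕ))).powersetCard d,
        ∏ i : Fin n, (if i ∈ A then m - 1 else (i.val + 1 - (if r ≤ (i : ℕ) then m - 1 else 0))) :=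
    (transfer m r d hm).trans (pi_count m r d hm hr)
  rw [hcard, Nat.cast_sum, Finset.sum_div]
  set T := ((univ : Finset (Fin n)).filter (fun i : Fin n => r ≤ (i : ℕ))) with hT
  set Creal := ∏ i : Fin n, (if r ≤ (i : ℕ) then (((i:ℕ):ℝ)+2-(m:ℝ))/(((i:ℕ):ℝ)+1) else 1)
    with hCreal
  have hfact : (Nat.factorial n : ℝ) = ∏ i : Fin n, (((i:ℕ):ℝ) + 1) := by
    rw [Fin.prod_univ_eq_prod_range (fun i => ((i:ℝ) + 1)) n,
      ← Finset.prod_range_add_one_eq_factorial n]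
    push_cast
    rfl
  have key : ∀ A ∈ T.powersetCard d,
      ((∏ i : Fin n, (if i ∈ A then m - 1 else (i.val + 1 - (if r ≤ (i : ℕ) then m - 1 else 0))) : ℕ) : ℝ)
        / (Nat.factorial n : ℝ)
      = (Creal * ((m:ℝ)-1)^d) * ∏ i ∈ A, (1 / ((i : ℕ) + 1 - (m:ℝ) + 1)) := by
    intro A hA
    rw [Finset.mem_powersetCard] at hA
    rw [hfact, Nat.cast_prod, ← Finset.prod_div_distrib]
    have hptw : ∀ i ∈ (univ : Finset (Fin n)),
        ((if i ∈ A then m - 1 else (i.val + 1 - (if r ≤ (i : ℕ) then m - 1 else 0)) : ℕ) : ℝ)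
          / (((i:ℕ):ℝ) + 1)
        = (if i ∈ A then ((m:ℝ)-1) * (1 / ((i : ℕ) + 1 - (m:ℝ) + 1)) else 1)
          * (if r ≤ (i : ℕ) then (((i:ℕ):ℝ)+2-(m:ℝ))/(((i:ℕ):ℝ)+1) else 1) := by
      intro i _
      by_cases hiA : i ∈ A
      · have hir : r ≤ (i : ℕ) := by
          have := hA.1 hiA
          simp only [hT, Finset.mem_filter, Finset.mem_univ, true_and] at this
          exact this
        rw [if_pos hiA, if_pos hiA, if_pos hir]
        have hle : m ≤ (i : ℕ) + 1 := by omega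
        have hmr : ((m:ℝ)) ≤ ((i:ℕ):ℝ) + 1 := by exact_mod_cast hle
        have h1 : (((i:ℕ):ℝ) + 1 - (m:ℝ) + 1) ≠ 0 := by linarith
        have h2 : (((i:ℕ):ℝ) + 1) ≠ 0 := by positivity
        rw [Nat.cast_sub (by omega : 1 ≤ m)]
        push_cast
        field_simp
        ring
      · rw [if_neg hiA, if_neg hiA, one_mul]
        by_cases hir : r ≤ (i : ℕ)
        · rw [if_pos hir, if_pos hir]
          rw [Nat.cast_sub (by omega : m - 1 ≤ (i:ℕ) + 1)]
          rw [Nat.cast_sub (by omega : 1 ≤ m)]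
          push_cast
          ring_nf
        · rw [if_neg hir, if_neg hir]
          rw [Nat.sub_zero]
          push_cast
          rw [div_self (by positivity)]
    rw [Finset.prod_congr rfl hptw, Finset.prod_mul_distrib]
    rw [Finset.prod_ite_mem univ A (fun i : Fin n => ((m:ℝ)-1) * (1 / ((i : ℕ) + 1 - (m:ℝ) + 1))),
      Finset.univ_inter, Finset.prod_mul_distrib, Finset.prod_const, hA.2]
    rw [← hCreal]
    ring
  rw [Finset.sum_congr rfl key, ← Finset.mul_sum]
  have hC : Creal = (∏ k ∈ Finset.range (m-1), ((r:ℝ) - (k:ℝ)))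
      / (∏ k ∈ Finset.range (m-1), ((n:ℝ) - (k:ℝ))) := by
    rw [hCreal, Fin.prod_univ_eq_prod_range
      (fun i => if r ≤ i then (((i:ℕ):ℝ)+2-(m:ℝ))/(((i:ℕ):ℝ)+1) else 1) n,
      ← Finset.prod_filter]
    have : (Finset.range n).filter (fun i => r ≤ i) = Finset.Ico r n := by
      ext i
      simp only [Finset.mem_filter, Finset.mem_range, Finset.mem_Ico]
      omega
    rw [this]
    exact C_eq m r n hm hr hrn
  rw [sum_reindex n m r d hrn, hC]
end

section
/- Let m ≥ 2 and let w : Fin n → Fin m → ℝ be nonnegative weights. For j ∈ Fin m, let MWM_{−j}(w) denote the maximum total weight of a partial matching that uses no edge incident to basestation j, and let MWM(w) denote the maximum total weight of a partial matching. Then Σ_{j=1}^m MWM_{−j}(w) ≥ (m−1) · MWM(w); equivalently, if a basestation j_0 is deleted uniformly at random, the expected maximum matching weight of the remaining graph is at least ((m−1)/m)·MWM(w). -/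
open scoped Classical

/-- Maximum total weight of a partial matching that uses no edge incident to
basestation `j`. -/
noncomputable def MWMdel {n m : ℕ} (w : Fin n → Fin m → ℝ) (j : Fin m) : ℝ :=
  ((Finset.univ : Finset (Finset (Fin n × Fin m))).filter
      (fun P => IsPartialMatching P ∧ ∀ e ∈ P, e.2 ≠ j)).sup'
    ⟨∅, by simp [IsPartialMatching]⟩ (fun P => ∑ e ∈ P, w e.1 e.2)

/-- `Σ_{j=1}^m MWM_{-j}(w) ≥ (m-1) · MWM(w)`; equivalently, deleting a
uniformly random basestation leaves an expected max-weight matching of at least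
`((m-1)/m) · MWM(w)`. -/
theorem stmt12 (n m : ℕ) (hm : 2 ≤ m) (w : Fin n → Fin m → ℝ)
    (hnn : ∀ i j, 0 ≤ w i j) :
    ((m : ℝ) - 1) * MWM w ≤ ∑ j : Fin m, MWMdel w j := by
  obtain ⟨P, hPmem, hPval⟩ := Finset.exists_mem_eq_sup'
    (⟨∅, by simp [IsPartialMatching]⟩ :
      ((Finset.univ : Finset (Finset (Fin n × Fin m))).filter IsPartialMatching).Nonempty)
    (fun P => ∑ e ∈ P, w e.1 e.2)
  have hPM : IsPartialMatching P := (Finset.mem_filter.mp hPmem).2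
  have hMWM : MWM w = ∑ e ∈ P, w e.1 e.2 := hPval
  -- For each j, the matching P with edges at j removed is admissible
  have key : ∀ j : Fin m, ∑ e ∈ P.filter (fun e => e.2 ≠ j), w e.1 e.2 ≤ MWMdel w j := by
    intro j
    have hmem : P.filter (fun e => e.2 ≠ j) ∈
        (Finset.univ : Finset (Finset (Fin n × Fin m))).filter
          (fun Q => IsPartialMatching Q ∧ ∀ e ∈ Q, e.2 ≠ j) := by
      simp only [Finset.mem_filter, Finset.mem_univ, true_and]
      refine ⟨fun e he e' he' h => hPM e (Finset.mem_filter.mp he).1 e' (Finset.mem_filter.mp he').1 h, fun e he => he.2⟩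
    exact Finset.le_sup' (fun Q => ∑ e ∈ Q, w e.1 e.2) hmem
  calc ((m : ℝ) - 1) * MWM w
      = ∑ j : Fin m, ∑ e ∈ P.filter (fun e => e.2 ≠ j), w e.1 e.2 := by
        have hsplit : ∀ j : Fin m,
            ∑ e ∈ P.filter (fun e => e.2 ≠ j), w e.1 e.2
              = (∑ e ∈ P, w e.1 e.2) - ∑ e ∈ P.filter (fun e => e.2 = j), w e.1 e.2 := by
          intro j
          have := Finset.sum_filter_add_sum_filter_not P (fun e => e.2 = j)
            (fun e => w e.1 e.2)
          rw [eq_sub_iff_add_eq, add_comm]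
          exact this
        simp only [hsplit]
        rw [Finset.sum_sub_distrib, Finset.sum_const, Finset.card_univ, Fintype.card_fin]
        have hswap : ∑ j : Fin m, ∑ e ∈ P.filter (fun e => e.2 = j), w e.1 e.2
            = ∑ e ∈ P, w e.1 e.2 := by
          rw [← Finset.sum_fiberwise P (fun e => e.2) (fun e => w e.1 e.2)]
        rw [hswap, hMWM, nsmul_eq_mul, sub_one_mul]
    _ ≤ ∑ j : Fin m, MWMdel w j := Finset.sum_le_sum fun j _ => key j
end

section
/- Let L and R be finite types and w : L × R → ℝ a nonnegative edge-weight function. Let M ⊆ L × R be a matching (no two elements of M share a first coordinate or share a second coordinate) with the greedy-maximality property: for every pair e = (u, v) ∈ L × R, either e ∈ M or there exists e' ∈ M sharing the first or the second coordinate with e such that w(e') ≥ w(e). Then for every matching M' ⊆ L × R, Σ_{e∈M'} w(e) ≤ 2 · Σ_{e∈M} w(e). In particular, the matching produced by the greedy algorithm that repeatedly adds the heaviest edge compatible with the current matching has weight at least half the maximum matching weight. -/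
/-- greedy matching is 2-competitive. Let `L`, `R` be finite types and
`w : L × R → ℝ` nonnegative. If `M` is a matching (no two of its pairs share a first or
a second coordinate) with the greedy-maximality property — every pair `e` is either in
`M` or is blocked by some `e' ∈ M` sharing a coordinate with it and with `w e' ≥ w e` —
then every matching `M'` satisfies `Σ_{e∈M'} w e ≤ 2 · Σ_{e∈M} w e`. -/
theorem stmt13 {L R : Type*} [Fintype L] [Fintype R] (w : L × R → ℝ)
    (hnn : ∀ e, 0 ≤ w e) (M : Finset (L × R))
    (hM : ∀ e ∈ M, ∀ e' ∈ M, (e.1 = e'.1 ∨ e.2 = e'.2) → e = e')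
    (hgreedy : ∀ e : L × R, e ∈ M ∨
      ∃ e' ∈ M, (e'.1 = e.1 ∨ e'.2 = e.2) ∧ w e ≤ w e')
    (M' : Finset (L × R))
    (hM' : ∀ e ∈ M', ∀ e' ∈ M', (e.1 = e'.1 ∨ e.2 = e'.2) → e = e') :
    ∑ e ∈ M', w e ≤ 2 * ∑ e ∈ M, w e := by
  classical
  -- for every edge e there is an edge in M sharing a coordinate with weight ≥ w e
  have hex : ∀ e : L × R, ∃ e', e' ∈ M ∧ (e'.1 = e.1 ∨ e'.2 = e.2) ∧ w e ≤ w e' := by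
    intro e
    rcases hgreedy e with he | ⟨e', h1, h2, h3⟩
    · exact ⟨e, he, Or.inl rfl, le_refl _⟩
    · exact ⟨e', h1, h2, h3⟩
  set f : L × R → L × R := fun e => (hex e).choose with hf
  have hfM : ∀ e, f e ∈ M := fun e => (hex e).choose_spec.1
  have hfsh : ∀ e, (f e).1 = e.1 ∨ (f e).2 = e.2 := fun e => (hex e).choose_spec.2.1
  have hfw : ∀ e, w e ≤ w (f e) := fun e => (hex e).choose_spec.2.2
  calc ∑ e ∈ M', w e ≤ ∑ e ∈ M', w (f e) := Finset.sum_le_sum fun e _ => hfw e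
    _ = ∑ b ∈ M'.image f, ∑ e ∈ M'.filter (fun e => f e = b), w (f e) := by
        rw [Finset.sum_fiberwise_of_maps_to]
        intro e he; exact Finset.mem_image_of_mem f he
    _ ≤ ∑ b ∈ M'.image f, 2 * w b := by
        apply Finset.sum_le_sum
        intro b hb
        have : ∑ e ∈ M'.filter (fun e => f e = b), w (f e)
            = ∑ e ∈ M'.filter (fun e => f e = b), w b := by
          apply Finset.sum_congr rfl
          intro e he
          rw [(Finset.mem_filter.mp he).2]
        rw [this, Finset.sum_const, nsmul_eq_mul]
        rcases Finset.mem_image.mp hb with ⟨e0, he0, hfe0⟩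
        have hb' : b ∈ M := hfe0 ▸ hfM e0
        have hcard : (M'.filter (fun e => f e = b)).card ≤ 2 := by
          have hinj : Set.InjOn (fun e : L × R => decide (e.1 = b.1))
              (M'.filter (fun e => f e = b)) := by
            intro x hx y hy hxy
            simp only [Finset.coe_filter, Set.mem_setOf_eq] at hx hy
            simp only [decide_eq_decide] at hxy
            have hxsh : x.1 = b.1 ∨ x.2 = b.2 := by
              have := hfsh x; rw [hx.2] at this; tauto
            have hysh : y.1 = b.1 ∨ y.2 = b.2 := by
              have := hfsh y; rw [hy.2] at this; tauto
            by_cases h1 : x.1 = b.1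
            · have h2 : y.1 = b.1 := hxy.mp h1
              exact hM' x hx.1 y hy.1 (Or.inl (h1.trans h2.symm))
            · have h2 : ¬ y.1 = b.1 := fun h => h1 (hxy.mpr h)
              have hx2 : x.2 = b.2 := hxsh.resolve_left h1
              have hy2 : y.2 = b.2 := hysh.resolve_left h2
              exact hM' x hx.1 y hy.1 (Or.inr (hx2.trans hy2.symm))
          have := Finset.card_le_card_of_injOn (fun e : L × R => decide (e.1 = b.1))
            (fun _ _ => Finset.mem_univ _) hinj
          simpa using this
        have : ((M'.filter (fun e => f e = b)).card : ℝ) ≤ 2 := by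
          exact_mod_cast hcard
        exact mul_le_mul_of_nonneg_right this (hnn b)
    _ ≤ ∑ b ∈ M, 2 * w b := by
        apply Finset.sum_le_sum_of_subset_of_nonneg
        · intro b hb
          rcases Finset.mem_image.mp hb with ⟨e0, _, hfe0⟩
          exact hfe0 ▸ hfM e0
        · intro b _ _
          exact mul_nonneg (by norm_num) (hnn b)
    _ = 2 * ∑ e ∈ M, w e := by rw [Finset.mul_sum]
end

section
/- Let m ≥ 1 and let v_1, …, v_n ≥ 0 be weights in arbitrary arrival order (identical-basestations case). Then there exists a sequence of allocations f_k : Fin k → Fin m for k = 1, …, n such that: (i) for every k, f_k attains the maximum time-sharing utility over all allocations of the first k users, i.e., TS(f_k, (v_1,…,v_k)) = max_g TS(g, (v_1,…,v_k)); and (ii) for every k < n, the restriction of f_{k+1} to the first k users differs from f_k in at most one user. In other words, an online algorithm that may reassign at most one previously assigned user upon each arrival achieves the optimal offline utility (competitive ratio 1) for identical basestations. -/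
/-!
Write `TS g = ∑ i, a i * c i`, where `c i` is the inverse size of the block of user `i`; the
weights `c i` lie in `(0, 1]` and add up to the number of stations `g` uses. The optimal
allocation keeps the `m - 1` most valuable users on private stations and pools the others.
Against it, an allocation `g` is compared by an exchange argument around a threshold `θ`
separating the private values from the pooled ones. If `g` uses all `m` stations, each of its
blocks is at most as large as the pool, so pooled users get at least their optimal weight;
otherwise the private users alone already beat `g`.

This form is kept online with at most one reassignment: a newcomer takes a free station while
there is one; afterwards it either joins the pool or, if it beats the weakest private user,
takes that user's station and sends them to the pool.
-/

open Finset

theorem Finset.sum_mul_le_sum_mul_of_threshold {ι R : Type*} [CommRing R] [LinearOrder R]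
    [IsStrictOrderedRing R] (s : Finset ι) {a c d : ι → R} {θ : R} (hθ : 0 ≤ θ)
    (hcd : ∑ i ∈ s, c i ≤ ∑ i ∈ s, d i) (h : ∀ i ∈ s, (a i - θ) * (c i - d i) ≤ 0) :
    ∑ i ∈ s, a i * c i ≤ ∑ i ∈ s, a i * d i := by
  have key : ∑ i ∈ s, a i * c i - ∑ i ∈ s, a i * d i
      = ∑ i ∈ s, (a i - θ) * (c i - d i) + θ * (∑ i ∈ s, c i - ∑ i ∈ s, d i) := by
    simp only [← sum_sub_distrib, mul_sum, ← sum_add_distrib]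
    exact sum_congr rfl fun _ _ => by ring
  nlinarith [sum_nonpos h, mul_nonpos_of_nonneg_of_nonpos hθ (sub_nonpos.mpr hcd)]

section Fibers

variable {ι β : Type*} [Fintype ι] [DecidableEq β]

theorem sum_inv_card_fiber_eq_card_image (g : ι → β) :
    ∑ i, (#{i' | g i' = g i} : ℝ)⁻¹ = #(univ.image g) := by
  rw [sum_comp (fun b => (#{i' | g i' = b} : ℝ)⁻¹) g, card_eq_sum_ones, Nat.cast_sum]
  refine sum_congr rfl fun b hb => ?_
  obtain ⟨i, -, rfl⟩ := mem_image.mp hb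
  have : (#{i' | g i' = g i} : ℝ) ≠ 0 := by
    exact_mod_cast (card_pos.mpr ⟨i, by simp⟩).ne'
  rw [nsmul_eq_mul, mul_inv_cancel₀ this, Nat.cast_one]

theorem inv_card_fiber_le_one (g : ι → β) (i : ι) : (#{i' | g i' = g i} : ℝ)⁻¹ ≤ 1 :=
  inv_le_one_of_one_le₀ (Nat.one_le_cast.mpr (card_pos.mpr ⟨i, by simp⟩))

theorem card_fiber_add_card_le_of_surjective [Fintype β] {g : ι → β}
    (hg : Function.Surjective g) (b : β) :
    #{i | g i = b} + Fintype.card β ≤ Fintype.card ι + 1 := by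
  have hsum := card_eq_sum_card_fiberwise (f := g) (s := univ) (t := univ) (fun _ _ => mem_univ _)
  rw [card_univ, ← add_sum_erase _ _ (mem_univ b)] at hsum
  have hpos : #((univ : Finset β).erase b) ≤ ∑ b' ∈ univ.erase b, #{i | g i = b'} := by
    rw [card_eq_sum_ones]
    exact sum_le_sum fun b' _ => card_pos.mpr <| (hg b').imp fun i hi => by simpa using hi
  rw [card_erase_of_mem (mem_univ b), card_univ] at hpos
  have := Fintype.card_pos_iff.mpr ⟨b⟩
  omega

end Fibers

theorem TS_eq_sum_div_card {n m : ℕ} (f : Fin n → Fin m) (w : Fin n → Fin m → ℝ) :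
    TS f w = ∑ i, w i (f i) / #{i' | f i' = f i} := by
  rw [TS, ← sum_fiberwise univ f]
  refine sum_congr rfl fun j _ => ?_
  rw [sum_div]
  refine sum_congr rfl fun i hi => ?_
  rw [(mem_filter.mp hi).2]

section Greedy

variable {m k : ℕ} [NeZero m]

/-- Station `0` is the pool; every other station holds at most one user, and these private
users, `min k (m - 1)` of them, are the most valuable ones. -/
structure TopSingletons (a : Fin k → ℝ) (f : Fin k → Fin m) : Prop where
  injOn : ∀ i i', f i ≠ 0 → f i = f i' → i = i'
  card_eq : #{i | f i ≠ 0} = min k (m - 1)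
  pool_le : ∀ i i', f i ≠ 0 → f i' = 0 → a i' ≤ a i

namespace TopSingletons

variable {a : Fin k → ℝ} {f : Fin k → Fin m}

theorem inv_card_fiber (hf : TopSingletons a f) (i : Fin k) :
    (#{i' | f i' = f i} : ℝ)⁻¹ = if f i = 0 then (#{i | f i = 0} : ℝ)⁻¹ else 1 := by
  split_ifs with h
  · rw [h]
  · have : #{i' | f i' = f i} = 1 :=
      card_eq_one.mpr ⟨i, by ext i'; simpa [eq_comm] using ⟨hf.injOn i i' h, fun h => h ▸ rfl⟩⟩
    rw [this, Nat.cast_one, inv_one]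

theorem card_pool (hf : TopSingletons a f) (hZ : ∃ i, f i = 0) :
    #{i | f i = 0} + (m - 1) = k := by
  obtain ⟨i₀, hi₀⟩ := hZ
  have hsplit : #{i | f i = 0} + #{i | f i ≠ 0} = k := by
    simpa using card_filter_add_card_filter_not (s := univ) (fun i => f i = 0)
  have hpos : 0 < #{i | f i = 0} := card_pos.mpr ⟨i₀, by simpa using hi₀⟩
  have := hf.card_eq
  omega

theorem sum_inv_card_fiber (hf : TopSingletons a f) (hZ : ∃ i, f i = 0) :
    ∑ i, (#{i' | f i' = f i} : ℝ)⁻¹ = m := by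
  have hT : #{i | f i ≠ 0} = m - 1 := by have := hf.card_pool hZ; have := hf.card_eq; omega
  have hZ0 : (#{i | f i = 0} : ℝ) ≠ 0 := by
    obtain ⟨i₀, hi₀⟩ := hZ
    exact_mod_cast (card_pos.mpr ⟨i₀, by simpa using hi₀⟩).ne'
  simp only [hf.inv_card_fiber, sum_ite, sum_const, nsmul_eq_mul, mul_one, mul_inv_cancel₀ hZ0]
  rw [hT, Nat.cast_pred (NeZero.pos m), add_sub_cancel]

theorem exists_threshold (hf : TopSingletons a f) (ha : ∀ i, 0 ≤ a i) (hZ : ∃ i, f i = 0) :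
    ∃ θ, 0 ≤ θ ∧ ∀ i, (f i = 0 → a i ≤ θ) ∧ (f i ≠ 0 → θ ≤ a i) := by
  obtain ⟨i₀, hi₀, hmax⟩ := exists_max_image {i | f i = 0} a (hZ.imp fun i hi => by simpa using hi)
  exact ⟨a i₀, ha i₀, fun i => ⟨fun h => hmax i (by simpa using h),
    fun h => hf.pool_le i i₀ h (by simpa using hi₀)⟩⟩

theorem card_fiber_le_card_pool (hf : TopSingletons a f) (hZ : ∃ i, f i = 0)
    {g : Fin k → Fin m} (hg : Function.Surjective g) (i : Fin k) :
    #{i' | g i' = g i} ≤ #{i | f i = 0} := by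
  have := card_fiber_add_card_le_of_surjective hg (g i)
  have := hf.card_pool hZ
  simp only [Fintype.card_fin] at *
  omega

theorem sum_le_of_exists_eq_zero (hf : TopSingletons a f) (ha : ∀ i, 0 ≤ a i)
    (hZ : ∃ i, f i = 0) (g : Fin k → Fin m) :
    ∑ i, a i * (#{i' | g i' = g i} : ℝ)⁻¹ ≤ ∑ i, a i * (#{i' | f i' = f i} : ℝ)⁻¹ := by
  obtain ⟨θ, hθ, hθa⟩ := hf.exists_threshold ha hZ
  have hc : ∀ i, (#{i' | g i' = g i} : ℝ)⁻¹ - 1 ≤ 0 := fun i =>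
    sub_nonpos.mpr (inv_card_fiber_le_one g i)
  by_cases hg : Function.Surjective g
  · refine sum_mul_le_sum_mul_of_threshold univ hθ ?_ fun i _ => ?_
    · rw [sum_inv_card_fiber_eq_card_image, image_univ_of_surjective hg, card_univ,
        Fintype.card_fin, hf.sum_inv_card_fiber hZ]
    rw [hf.inv_card_fiber]
    split_ifs with h
    · have : (#{i | f i = 0} : ℝ)⁻¹ ≤ (#{i' | g i' = g i} : ℝ)⁻¹ :=
        inv_anti₀ (Nat.cast_pos.mpr (card_pos.mpr ⟨i, by simp⟩))
          (Nat.cast_le.mpr (hf.card_fiber_le_card_pool hZ hg i))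
      exact mul_nonpos_of_nonpos_of_nonneg (sub_nonpos.mpr ((hθa i).1 h)) (sub_nonneg.mpr this)
    · exact mul_nonpos_of_nonneg_of_nonpos (sub_nonneg.mpr ((hθa i).2 h)) (hc i)
  obtain ⟨b, hb⟩ : ∃ b, ∀ i, g i ≠ b := by simpa [Function.Surjective] using hg
  have hlt : #(univ.image g) < m := by
    simpa using card_lt_univ_of_notMem (x := b) (by simpa using hb)
  calc ∑ i, a i * (#{i' | g i' = g i} : ℝ)⁻¹ ≤ ∑ i, a i * (if f i ≠ 0 then 1 else 0) := by
        refine sum_mul_le_sum_mul_of_threshold univ hθ ?_ fun i _ => ?_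
        · rw [sum_inv_card_fiber_eq_card_image, sum_boole]
          have := hf.card_pool hZ
          have := hf.card_eq
          exact_mod_cast (show #(univ.image g) ≤ #{i | f i ≠ 0} by omega)
        by_cases h : f i = 0
        · simpa [h] using mul_nonpos_of_nonpos_of_nonneg (sub_nonpos.mpr ((hθa i).1 h))
            (inv_nonneg.mpr (Nat.cast_nonneg _))
        · simpa [h] using mul_nonpos_of_nonneg_of_nonpos (sub_nonneg.mpr ((hθa i).2 h)) (hc i)
    _ ≤ ∑ i, a i * (#{i' | f i' = f i} : ℝ)⁻¹ := by
        refine sum_le_sum fun i _ => mul_le_mul_of_nonneg_left ?_ (ha i)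
        rw [hf.inv_card_fiber]
        split_ifs <;> simp_all

theorem TS_le (hf : TopSingletons a f) (ha : ∀ i, 0 ≤ a i) (g : Fin k → Fin m) :
    TS g (fun i _ => a i) ≤ TS f (fun i _ => a i) := by
  simp only [TS_eq_sum_div_card, div_eq_mul_inv]
  by_cases hZ : ∃ i, f i = 0
  · exact hf.sum_le_of_exists_eq_zero ha hZ g
  simp only [not_exists] at hZ
  refine sum_le_sum fun i _ => ?_
  rw [hf.inv_card_fiber, if_neg (hZ i), mul_one]
  exact mul_le_of_le_one_right (ha i) (inv_card_fiber_le_one g i)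

end TopSingletons

theorem exists_ne_zero_forall_ne (f : Fin k → Fin m) (hk : k + 1 < m) :
    ∃ j, j ≠ 0 ∧ ∀ i, f i ≠ j := by
  have hcard : #(insert 0 (univ.image f)) < #(univ : Finset (Fin m)) :=
    calc #(insert 0 (univ.image f)) ≤ #(univ.image f) + 1 := card_insert_le _ _
      _ ≤ k + 1 := by simpa using card_image_le (s := univ) (f := f)
      _ < #(univ : Finset (Fin m)) := by simpa using hk
  obtain ⟨j, -, hj⟩ := exists_mem_notMem_of_card_lt_card hcard
  simp only [mem_insert, mem_image, mem_univ, true_and, not_or, not_exists] at hj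
  exact ⟨j, hj.1, hj.2⟩

noncomputable def greedyStep (w : ℕ → ℝ) (f : Fin k → Fin m) : Fin (k + 1) → Fin m :=
  if hk : k + 1 < m then Fin.snoc f (exists_ne_zero_forall_ne f hk).choose
  else if h : ∃ i, f i ≠ 0 ∧ w i < w k ∧ ∀ i', f i' ≠ 0 → w i ≤ w i' then
    Fin.snoc (Function.update f h.choose 0) (f h.choose)
  else Fin.snoc f 0

variable (m) in
noncomputable def greedy (w : ℕ → ℝ) : (k : ℕ) → Fin k → Fin m
  | 0 => Fin.elim0
  | k + 1 => greedyStep w (greedy w k)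

theorem TopSingletons.snoc {a : Fin (k + 1) → ℝ} {g : Fin k → Fin m} {j : Fin m}
    (hinj : ∀ i i', g i ≠ 0 → g i = g i' → i = i') (hfree : j ≠ 0 → ∀ i, g i ≠ j)
    (hcard : #{i | g i ≠ 0} + (if j = 0 then 0 else 1) = min (k + 1) (m - 1))
    (hle : ∀ i i', g i ≠ 0 → g i' = 0 → a i'.castSucc ≤ a i.castSucc)
    (hle_last : j ≠ 0 → ∀ i, g i = 0 → a i.castSucc ≤ a (Fin.last k))
    (hlast_le : j = 0 → ∀ i, g i ≠ 0 → a (Fin.last k) ≤ a i.castSucc) :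
    TopSingletons a (Fin.snoc g j : Fin (k + 1) → Fin m) where
  injOn := by
    simp only [Fin.forall_fin_succ', Fin.snoc_castSucc, Fin.snoc_last, Fin.castSucc_inj]
    grind
  card_eq := by
    rw [card_filter, Fin.sum_univ_castSucc, ← hcard, card_filter]
    simp
  pool_le := by
    simp only [Fin.forall_fin_succ', Fin.snoc_castSucc, Fin.snoc_last]
    grind

theorem TopSingletons.greedyStep {w : ℕ → ℝ} {f : Fin k → Fin m}
    (hf : TopSingletons (fun i : Fin k => w i) f) :
    TopSingletons (fun i : Fin (k + 1) => w i) (greedyStep w f) := by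
  have hT := hf.card_eq
  unfold _root_.greedyStep
  split_ifs with hk h
  · obtain ⟨hj0, hfree⟩ := (exists_ne_zero_forall_ne f hk).choose_spec
    have hall : ∀ i, f i ≠ 0 := by
      simpa using card_filter_eq_iff.mp (hT.trans (by rw [card_univ, Fintype.card_fin]; omega))
    refine .snoc hf.injOn (fun _ => hfree) ?_ (by simpa using hf.pool_le)
      (fun _ i hi => absurd hi (hall i)) (fun h => absurd h hj0)
    rw [if_neg hj0, hT]
    omega
  · obtain ⟨h0, hlt, hmin⟩ := h.choose_spec
    set i₀ := h.choose
    have hinj := hf.injOn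
    have hle : ∀ i i', f i ≠ 0 → f i' = 0 → w i' ≤ w i := hf.pool_le
    have hcard : #{i | Function.update f i₀ 0 i ≠ 0} + 1 = #{i | f i ≠ 0} := by
      rw [← card_erase_add_one (s := {i | f i ≠ 0}) (by simpa using h0)]
      congr 2
      ext x
      by_cases hx : x = i₀ <;> simp [hx]
    refine .snoc ?_ ?_ (by rw [if_neg h0, hcard, hT]; omega) ?_ ?_ ?_ <;>
      simp only [Function.update_apply, Fin.val_castSucc, Fin.val_last] <;> grind
  · simp only [not_exists, not_and] at h
    refine .snoc hf.injOn (fun h => absurd rfl h) ?_ (by simpa using hf.pool_le)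
      (fun h => absurd rfl h) fun _ i hi => ?_
    · rw [if_pos rfl, hT]
      omega
    · obtain ⟨i₁, hi₁, hmin⟩ :=
        exists_min_image {i | f i ≠ 0} (fun i : Fin k => w i) ⟨i, by simpa using hi⟩
      simp only [mem_filter, mem_univ, true_and] at hi₁ hmin
      have hk_le : w k ≤ w i₁ := not_lt.mp fun hlt => h i₁ hi₁ hlt hmin
      simpa using hk_le.trans (hmin i hi)

theorem card_filter_greedyStep_ne_le_one (w : ℕ → ℝ) (f : Fin k → Fin m) :
    #{i : Fin k | greedyStep w f i.castSucc ≠ f i} ≤ 1 := by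
  unfold greedyStep
  split_ifs with hk h
  · simp
  · refine card_le_one.mpr fun x hx y hy => ?_
    simp only [mem_filter, mem_univ, true_and, Fin.snoc_castSucc] at hx hy
    have hne : ∀ i, Function.update f h.choose 0 i ≠ f i → i = h.choose := fun i hi =>
      by_contra fun hi' => hi (Function.update_of_ne hi' _ _)
    exact (hne x hx).trans (hne y hy).symm
  · simp

end Greedy

theorem topSingletons_greedy {m : ℕ} [NeZero m] (w : ℕ → ℝ) :
    ∀ k, TopSingletons (fun i : Fin k => w i) (greedy m w k)
  | 0 => ⟨fun i => i.elim0, by simp, fun i => i.elim0⟩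
  | k + 1 => (topSingletons_greedy w k).greedyStep

/-- identical basestations, reassignment of at most one user per arrival.
There is a sequence of allocations `F k : Fin k → Fin m` such that (i) each `F k` attains
the maximum time-sharing utility over all allocations of the first `k` users, and
(ii) `F (k+1)` restricted to the first `k` users differs from `F k` in at most one user.
So an online algorithm allowed one reassignment per arrival achieves the offline optimum. -/
theorem stmt14 (n m : ℕ) (hm : 1 ≤ m) (v : Fin n → ℝ) (hnn : ∀ i, 0 ≤ v i) :
    ∃ F : (k : ℕ) → Fin k → Fin m,
      (∀ (k : ℕ) (hk : k ≤ n), ∀ g : Fin k → Fin m,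
          TS g (fun i _ => v ⟨(i : ℕ), lt_of_lt_of_le i.isLt hk⟩)
            ≤ TS (F k) (fun i _ => v ⟨(i : ℕ), lt_of_lt_of_le i.isLt hk⟩))
      ∧ (∀ k : ℕ, k + 1 ≤ n →
          (Finset.univ.filter (fun i : Fin k => F (k + 1) i.castSucc ≠ F k i)).card ≤ 1) := by
  have : NeZero m := NeZero.of_pos hm
  let w : ℕ → ℝ := fun i => if h : i < n then v ⟨i, h⟩ else 0
  have hw : ∀ i, 0 ≤ w i := fun i => dite_nonneg (fun _ => hnn _) fun _ => le_rfl
  refine ⟨greedy m w, fun k hk g => ?_, fun k _ => card_filter_greedyStep_ne_le_one w _⟩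
  have hv : (fun (i : Fin k) (_ : Fin m) => v ⟨i, lt_of_lt_of_le i.isLt hk⟩)
      = fun (i : Fin k) _ => w i := by
    funext i _
    simp [w, lt_of_lt_of_le i.isLt hk]
  rw [hv]
  exact (topSingletons_greedy w k).TS_le (fun i => hw i) g
end

section
/- For integers 0 ≤ t < n and d ≥ 1, define A_d(t, n) = Σ_{t+1 ≤ i_1 < i_2 < ⋯ < i_d ≤ n} 1/(i_1 i_2 ⋯ i_d). Then for every d ≥ 1 there exists a constant C > 0, depending only on d, such that for all integers 1 ≤ t < n, |A_d(t, n) − (1/d!)·(ln(n/t))^d| ≤ C · (ln(n/t))^{d−1} / t. -/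
/-!
Write `H = A₁(t, n) = ∑_{t < i ≤ n} 1/i`. Expanding `H · A_d` and sorting the terms by whether the
new index lies in the subset gives `H · A_d = (d + 1) A_{d+1} + ∑_S (∏_S 1/i)(∑_S 1/i)`, where the
error sum lies between `0` and `(d / t) A_d`. Comparing `1/i` with `ln i - ln (i - 1)` gives
`H ≤ ln (n/t) ≤ H + 1/t`. The identity first yields `d! A_d ≤ H^d ≤ ln (n/t)^d`, and then, by
induction on `d`, `|A_d - ln (n/t)^d / d!| ≤ 2 ln (n/t)^(d-1) / t`: so `C = 2` works for every `d`.
-/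

/-- `A_d(t,n) = Σ_{t+1 ≤ i₁ < i₂ < ⋯ < i_d ≤ n} 1/(i₁ i₂ ⋯ i_d)`, the sum over all
`d`-element subsets of `{t+1, …, n}` of the reciprocal of the product. -/
noncomputable def Aseq (d t n : ℕ) : ℝ :=
  ∑ A ∈ (Finset.Icc (t + 1) n).powersetCard d, ∏ i ∈ A, 1 / (i : ℝ)

open Finset
open scoped Nat

section PowersetCard

variable {ι R : Type*} [DecidableEq ι]

theorem sum_powersetCard_sum_sdiff_insert [AddCommMonoid R] (I : Finset ι) (g : Finset ι → R)
    (d : ℕ) :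
    ∑ A ∈ I.powersetCard d, ∑ i ∈ I \ A, g (insert i A)
      = (d + 1) • ∑ B ∈ I.powersetCard (d + 1), g B := by
  calc ∑ A ∈ I.powersetCard d, ∑ i ∈ I \ A, g (insert i A)
      = ∑ B ∈ I.powersetCard (d + 1), ∑ _i ∈ B, g B := by
        rw [sum_sigma', sum_sigma']
        refine sum_nbij' (fun p => ⟨insert p.2 p.1, p.2⟩) (fun p => ⟨p.1.erase p.2, p.2⟩)
          ?_ ?_ ?_ ?_ fun _ _ => rfl
        · rintro ⟨A, i⟩ hp
          simp only [mem_sigma, mem_powersetCard, mem_sdiff] at hp ⊢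
          obtain ⟨⟨hAI, rfl⟩, hiI, hiA⟩ := hp
          exact ⟨⟨insert_subset hiI hAI, card_insert_of_notMem hiA⟩, mem_insert_self _ _⟩
        · rintro ⟨B, i⟩ hp
          simp only [mem_sigma, mem_powersetCard, mem_sdiff] at hp ⊢
          obtain ⟨⟨hBI, hcard⟩, hiB⟩ := hp
          exact ⟨⟨(erase_subset _ _).trans hBI, by rw [card_erase_of_mem hiB, hcard]; rfl⟩,
            hBI hiB, notMem_erase _ _⟩
        · rintro ⟨A, i⟩ hp
          simp only [mem_sigma, mem_sdiff] at hp
          simp [erase_insert hp.2.2]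
        · rintro ⟨B, i⟩ hp
          simp only [mem_sigma] at hp
          simp [insert_erase hp.2]
    _ = (d + 1) • ∑ B ∈ I.powersetCard (d + 1), g B := by
        rw [smul_sum]
        exact sum_congr rfl fun B hB => by rw [sum_const, (mem_powersetCard.1 hB).2]

theorem sum_mul_sum_powersetCard_prod [CommSemiring R] (I : Finset ι) (f : ι → R) (d : ℕ) :
    (∑ i ∈ I, f i) * ∑ A ∈ I.powersetCard d, ∏ j ∈ A, f j
      = (d + 1) * ∑ B ∈ I.powersetCard (d + 1), ∏ j ∈ B, f j
        + ∑ A ∈ I.powersetCard d, (∏ j ∈ A, f j) * ∑ i ∈ A, f i := by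
  have hsplit : ∀ A ∈ I.powersetCard d, (∏ j ∈ A, f j) * ∑ i ∈ I, f i
      = ∑ i ∈ I \ A, ∏ j ∈ insert i A, f j + (∏ j ∈ A, f j) * ∑ i ∈ A, f i := by
    intro A hA
    rw [← sum_sdiff (mem_powersetCard.1 hA).1, mul_add, mul_sum]
    congr 1
    exact sum_congr rfl fun i hi => by rw [prod_insert (mem_sdiff.1 hi).2, mul_comm]
  rw [mul_comm, sum_mul, sum_congr rfl hsplit, sum_add_distrib,
    sum_powersetCard_sum_sdiff_insert I (fun B => ∏ j ∈ B, f j), nsmul_eq_mul, Nat.cast_succ]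

variable [CommSemiring R] [PartialOrder R] [IsOrderedRing R] {I : Finset ι} {f : ι → R}

theorem succ_mul_sum_powersetCard_prod_le (hf : ∀ i ∈ I, 0 ≤ f i) (d : ℕ) :
    (d + 1) * ∑ B ∈ I.powersetCard (d + 1), ∏ j ∈ B, f j
      ≤ (∑ i ∈ I, f i) * ∑ A ∈ I.powersetCard d, ∏ j ∈ A, f j := by
  rw [sum_mul_sum_powersetCard_prod]
  refine le_add_of_nonneg_right (sum_nonneg fun A hA => ?_)
  have hAI := (mem_powersetCard.1 hA).1
  exact mul_nonneg (prod_nonneg fun j hj => hf j (hAI hj)) (sum_nonneg fun i hi => hf i (hAI hi))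

theorem sum_mul_sum_powersetCard_prod_le {c : R} (hf : ∀ i ∈ I, 0 ≤ f i)
    (hfc : ∀ i ∈ I, f i ≤ c) (d : ℕ) :
    (∑ i ∈ I, f i) * ∑ A ∈ I.powersetCard d, ∏ j ∈ A, f j
      ≤ (d + 1) * ∑ B ∈ I.powersetCard (d + 1), ∏ j ∈ B, f j
        + d * c * ∑ A ∈ I.powersetCard d, ∏ j ∈ A, f j := by
  rw [sum_mul_sum_powersetCard_prod, mul_sum (I.powersetCard d)]
  refine add_le_add_right (sum_le_sum fun A hA => ?_) _
  obtain ⟨hAI, hcard⟩ := mem_powersetCard.1 hA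
  have hsum : ∑ i ∈ A, f i ≤ d * c := by
    simpa [hcard] using sum_le_card_nsmul A f c fun i hi => hfc i (hAI hi)
  rw [mul_comm (∏ j ∈ A, f j)]
  exact mul_le_mul_of_nonneg_right hsum (prod_nonneg fun j hj => hf j (hAI hj))

theorem factorial_mul_sum_powersetCard_prod_le_pow (hf : ∀ i ∈ I, 0 ≤ f i) (d : ℕ) :
    d ! * ∑ A ∈ I.powersetCard d, ∏ j ∈ A, f j ≤ (∑ i ∈ I, f i) ^ d := by
  induction d with
  | zero => simp
  | succ d ih =>
    calc ((d + 1)! : R) * ∑ A ∈ I.powersetCard (d + 1), ∏ j ∈ A, f j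
        = d ! * ((d + 1) * ∑ A ∈ I.powersetCard (d + 1), ∏ j ∈ A, f j) := by
          rw [Nat.factorial_succ]; push_cast; ring
      _ ≤ d ! * ((∑ i ∈ I, f i) * ∑ A ∈ I.powersetCard d, ∏ j ∈ A, f j) :=
          mul_le_mul_of_nonneg_left (succ_mul_sum_powersetCard_prod_le hf d) (by positivity)
      _ = (∑ i ∈ I, f i) * (d ! * ∑ A ∈ I.powersetCard d, ∏ j ∈ A, f j) := by ring
      _ ≤ (∑ i ∈ I, f i) * (∑ i ∈ I, f i) ^ d :=
          mul_le_mul_of_nonneg_left ih (sum_nonneg hf)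
      _ = (∑ i ∈ I, f i) ^ (d + 1) := (pow_succ' _ _).symm

end PowersetCard

section Harmonic

open Real

theorem one_div_add_one_le_log_add_one_sub_log {x : ℝ} (hx : 0 < x) :
    1 / (x + 1) ≤ log (x + 1) - log x := by
  have h := one_sub_inv_le_log_of_pos (x := (x + 1) / x) (by positivity)
  rw [log_div (by positivity) hx.ne', inv_div] at h
  convert h using 1
  field_simp
  ring

theorem log_add_one_sub_log_le_one_div {x : ℝ} (hx : 0 < x) :
    log (x + 1) - log x ≤ 1 / x := by
  have h := log_le_sub_one_of_pos (x := (x + 1) / x) (by positivity)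
  rw [log_div (by positivity) hx.ne'] at h
  convert h using 1
  field_simp
  ring

theorem sum_Icc_one_div_le_log_sub_log {t n : ℕ} (ht : 0 < t) (htn : t ≤ n) :
    ∑ i ∈ Icc (t + 1) n, 1 / (i : ℝ) ≤ log n - log t := by
  induction n, htn using Nat.le_induction with
  | base => simp
  | succ n htn ih =>
    rw [sum_Icc_succ_top (by omega)]
    have hstep :=
      one_div_add_one_le_log_add_one_sub_log (x := n) (by exact_mod_cast ht.trans_le htn)
    push_cast
    linarith

theorem log_sub_log_le_sum_Icc_one_div_add {t n : ℕ} (ht : 0 < t) (htn : t ≤ n) :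
    log n - log t ≤ ∑ i ∈ Icc (t + 1) n, 1 / (i : ℝ) + 1 / t := by
  suffices h : log n - log t + 1 / n ≤ ∑ i ∈ Icc (t + 1) n, 1 / (i : ℝ) + 1 / t by
    have : (0 : ℝ) ≤ 1 / n := by positivity
    linarith
  induction n, htn using Nat.le_induction with
  | base => simp
  | succ n htn ih =>
    rw [sum_Icc_succ_top (by omega)]
    have hstep := log_add_one_sub_log_le_one_div (x := n) (by exact_mod_cast ht.trans_le htn)
    push_cast
    linarith

end Harmonic

section Aseq

open Real

variable {t n : ℕ}

theorem Aseq_nonneg (d t n : ℕ) : 0 ≤ Aseq d t n := by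
  unfold Aseq
  positivity

theorem Aseq_one (t n : ℕ) : Aseq 1 t n = ∑ i ∈ Icc (t + 1) n, 1 / (i : ℝ) := by
  rw [Aseq, powersetCard_one, sum_map]
  simp

theorem Aseq_one_le_log (ht : 0 < t) (htn : t ≤ n) : Aseq 1 t n ≤ log (n / t) := by
  rw [Aseq_one, log_div (by exact_mod_cast (ht.trans_le htn).ne') (by exact_mod_cast ht.ne')]
  exact sum_Icc_one_div_le_log_sub_log ht htn

theorem log_le_Aseq_one_add (ht : 0 < t) (htn : t ≤ n) :
    log (n / t) ≤ Aseq 1 t n + (t : ℝ)⁻¹ := by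
  rw [Aseq_one, log_div (by exact_mod_cast (ht.trans_le htn).ne') (by exact_mod_cast ht.ne'),
    ← one_div]
  exact log_sub_log_le_sum_Icc_one_div_add ht htn

theorem Aseq_le_log_pow_div_factorial (ht : 0 < t) (htn : t ≤ n) (d : ℕ) :
    Aseq d t n ≤ log (n / t) ^ d / d ! := by
  rw [le_div_iff₀ (by positivity), mul_comm]
  calc d ! * Aseq d t n ≤ Aseq 1 t n ^ d := by
        rw [Aseq, Aseq_one]
        exact factorial_mul_sum_powersetCard_prod_le_pow (fun i _ => by positivity) d
    _ ≤ log (n / t) ^ d := pow_le_pow_left₀ (Aseq_nonneg 1 t n) (Aseq_one_le_log ht htn) d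

theorem succ_mul_Aseq_succ_le (d t n : ℕ) :
    (d + 1) * Aseq (d + 1) t n ≤ Aseq 1 t n * Aseq d t n := by
  rw [Aseq_one, Aseq, Aseq]
  exact succ_mul_sum_powersetCard_prod_le (fun i _ => by positivity) d

theorem Aseq_one_mul_le (ht : 0 < t) (n d : ℕ) :
    Aseq 1 t n * Aseq d t n ≤ (d + 1) * Aseq (d + 1) t n + d * (t : ℝ)⁻¹ * Aseq d t n := by
  rw [Aseq_one, Aseq, Aseq]
  refine sum_mul_sum_powersetCard_prod_le (fun i _ => by positivity) (fun i hi => ?_) d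
  have hti : t ≤ i := (Nat.le_succ t).trans (mem_Icc.1 hi).1
  rw [one_div]
  exact inv_anti₀ (by exact_mod_cast ht) (by exact_mod_cast hti)

theorem abs_Aseq_succ_succ_sub_le (ht : 0 < t) (htn : t ≤ n) (d : ℕ)
    (ih : |Aseq (d + 1) t n - log (n / t) ^ (d + 1) / (d + 1)!| ≤ 2 * log (n / t) ^ d / t) :
    |Aseq (d + 2) t n - log (n / t) ^ (d + 2) / (d + 2)!| ≤ 2 * log (n / t) ^ (d + 1) / t := by
  have hHL := Aseq_one_le_log ht htn
  have hLH := log_le_Aseq_one_add ht htn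
  have hAP := Aseq_le_log_pow_div_factorial ht htn (d + 1)
  have hlow : ((d + 1 : ℕ) + 1 : ℝ) * Aseq (d + 2) t n ≤ _ := succ_mul_Aseq_succ_le (d + 1) t n
  have hupp := Aseq_one_mul_le ht n (d + 1)
  have hid : ((d + 2 : ℕ) : ℝ) * (log (n / t) ^ (d + 2) / (d + 2)!)
      = log (n / t) * (log (n / t) ^ (d + 1) / (d + 1)!) := by
    rw [Nat.factorial_succ (d + 1)]; push_cast; field_simp; ring
  set L := log ((n : ℝ) / t)
  set H := Aseq 1 t n
  set A := Aseq (d + 1) t n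
  set P := L ^ (d + 1) / (d + 1)!
  have hL0 : 0 ≤ L := (Aseq_nonneg 1 t n).trans hHL
  have hP0 : 0 ≤ P := by positivity
  have hPL : P ≤ L ^ (d + 1) :=
    div_le_self (pow_nonneg hL0 _) (by exact_mod_cast (d + 1).factorial_pos)
  have hmain : |H * (A - P)| ≤ 2 * L ^ (d + 1) * (t : ℝ)⁻¹ := by
    rw [abs_mul, abs_of_nonneg (Aseq_nonneg 1 t n)]
    calc H * |A - P| ≤ L * (2 * L ^ d / t) := mul_le_mul hHL ih (abs_nonneg _) hL0
      _ = 2 * L ^ (d + 1) * (t : ℝ)⁻¹ := by ring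
  have hgap : (L - H) * P ≤ L ^ (d + 1) * (t : ℝ)⁻¹ :=
    calc (L - H) * P ≤ (t : ℝ)⁻¹ * L ^ (d + 1) := mul_le_mul (by linarith) hPL hP0 (by positivity)
      _ = L ^ (d + 1) * (t : ℝ)⁻¹ := by ring
  have hgap0 : 0 ≤ (L - H) * P := mul_nonneg (by linarith) hP0
  have herr : ((d + 1 : ℕ) : ℝ) * (t : ℝ)⁻¹ * A ≤ ((d + 1 : ℕ) : ℝ) * (t : ℝ)⁻¹ * L ^ (d + 1) :=
    mul_le_mul_of_nonneg_left (hAP.trans hPL) (by positivity)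
  have hslack : 0 ≤ d * L ^ (d + 1) * (t : ℝ)⁻¹ := by positivity
  suffices h : |((d + 2 : ℕ) : ℝ) * (Aseq (d + 2) t n - L ^ (d + 2) / (d + 2)!)|
      ≤ ((d + 2 : ℕ) : ℝ) * (2 * L ^ (d + 1) / t) by
    rw [abs_mul, abs_of_pos (by positivity)] at h
    exact le_of_mul_le_mul_left h (by positivity)
  -- `(d + 2) A_{d+2} - L P = H (A - P) - (L - H) P - ε` with `0 ≤ ε ≤ (d + 1) A / t`
  rw [mul_sub, hid, abs_le, div_eq_mul_inv]
  rw [abs_le] at hmain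
  push_cast at hlow hupp herr ⊢
  constructor <;> linarith

theorem abs_Aseq_succ_sub_le (ht : 0 < t) (htn : t ≤ n) (d : ℕ) :
    |Aseq (d + 1) t n - log (n / t) ^ (d + 1) / (d + 1)!| ≤ 2 * log (n / t) ^ d / t := by
  induction d with
  | zero =>
    have hHL := Aseq_one_le_log ht htn
    have hLH := log_le_Aseq_one_add ht htn
    have ht0 : (0 : ℝ) < (t : ℝ)⁻¹ := by positivity
    rw [abs_le, zero_add, pow_one, pow_zero, Nat.factorial_one, Nat.cast_one, div_one,
      mul_one, div_eq_mul_inv]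
    constructor <;> linarith
  | succ d ih => exact abs_Aseq_succ_succ_sub_le ht htn d ih

end Aseq

/-- for every `d ≥ 1` there is a constant `C > 0`, depending only on `d`,
such that for all integers `1 ≤ t < n`,
`|A_d(t,n) - (1/d!)·(ln(n/t))^d| ≤ C · (ln(n/t))^{d-1} / t`. -/
theorem stmt15 (d : ℕ) (hd : 1 ≤ d) :
    ∃ C : ℝ, 0 < C ∧ ∀ t n : ℕ, 1 ≤ t → t < n →
      |Aseq d t n - (1 / (Nat.factorial d : ℝ)) * Real.log ((n : ℝ) / (t : ℝ)) ^ d|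
        ≤ C * Real.log ((n : ℝ) / (t : ℝ)) ^ (d - 1) / (t : ℝ) := by
  obtain ⟨k, rfl⟩ := Nat.exists_eq_add_of_le' hd
  refine ⟨2, two_pos, fun t n ht htn => ?_⟩
  rw [one_div_mul_eq_div, Nat.add_sub_cancel]
  exact abs_Aseq_succ_sub_le ht htn.le k
end

section
/- Let n ≥ m ≥ 1 and let w : Fin n → Fin m → ℝ be nonnegative weights. For each user i, let mw_i = max_j w i j be its maximum weight. Then for every allocation f : Fin n → Fin m, TS(f, w) is at most the sum of the m largest values among mw_1, …, mw_n. -/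
/-- with `mw i = max_j w i j`, every allocation's time-sharing utility is
at most the sum of the `m` largest values among `mw 1, …, mw n`, expressed as the maximum
over all `m`-element subsets `S` of the users of `Σ_{i∈S} mw i`. -/
theorem stmt19 (n m : ℕ) (hm : 1 ≤ m) (hmn : m ≤ n) (w : Fin n → Fin m → ℝ)
    (hnn : ∀ i j, 0 ≤ w i j) (f : Fin n → Fin m) :
    TS f w ≤
      ((Finset.univ : Finset (Fin n)).powersetCard m).sup'
        (Finset.powersetCard_nonempty.mpr (by simpa using hmn))
        (fun S => ∑ i ∈ S,
          (Finset.univ : Finset (Fin m)).sup' ⟨⟨0, hm⟩, Finset.mem_univ _⟩ (w i)) := by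
  classical
  set mw : Fin n → ℝ :=
    fun i => (Finset.univ : Finset (Fin m)).sup' ⟨⟨0, hm⟩, Finset.mem_univ _⟩ (w i) with hmwdef
  have hmwle : ∀ i j, w i j ≤ mw i := fun i j => Finset.le_sup' (w i) (Finset.mem_univ j)
  have hmwnn : ∀ i, 0 ≤ mw i := fun i => le_trans (hnn i ⟨0, hm⟩) (hmwle i ⟨0, hm⟩)
  set F : Fin m → Finset (Fin n) := fun j => Finset.univ.filter (fun i => f i = j) with hF
  set J : Finset (Fin m) := Finset.univ.filter (fun j => (F j).Nonempty) with hJ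
  -- representative with maximal mw in each nonempty fiber
  have hrep : ∀ j ∈ J, ∃ i ∈ F j, ∀ k ∈ F j, mw k ≤ mw i := by
    intro j hj
    have hne : (F j).Nonempty := (Finset.mem_filter.mp hj).2
    exact Finset.exists_max_image (F j) mw hne
  choose rep hrepmem hrepmax using hrep
  -- step 1 : TS ≤ ∑ over attached J of mw of representative
  have h1 : TS f w ≤ ∑ j ∈ J.attach, mw (rep j.1 j.2) := by
    have hTS : TS f w = ∑ j ∈ J, (∑ i ∈ F j, w i j) / ((F j).card : ℝ) := by
      rw [TS]
      refine (Finset.sum_subset (Finset.subset_univ J) ?_).symm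
      intro j _ hj
      have hFj : F j = ∅ := by
        by_contra hne
        exact hj (Finset.mem_filter.mpr ⟨Finset.mem_univ _, Finset.nonempty_iff_ne_empty.mpr hne⟩)
      show (∑ i ∈ F j, w i j) / ((F j).card : ℝ) = 0
      rw [hFj]
      simp
    rw [hTS, ← Finset.sum_attach J (fun j => (∑ i ∈ F j, w i j) / ((F j).card : ℝ))]
    refine Finset.sum_le_sum ?_
    rintro ⟨j, hj⟩ _
    have hne : (F j).Nonempty := (Finset.mem_filter.mp hj).2
    have hcard : (0 : ℝ) < (F j).card := by
      exact_mod_cast Finset.card_pos.mpr hne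
    rw [div_le_iff₀ hcard]
    calc ∑ i ∈ F j, w i j ≤ ∑ _i ∈ F j, mw (rep j hj) := by
          refine Finset.sum_le_sum ?_
          intro i hi
          exact le_trans (hmwle i j) (hrepmax j hj i hi)
      _ = (F j).card * mw (rep j hj) := by
          rw [Finset.sum_const, nsmul_eq_mul]
      _ = mw (rep j hj) * (F j).card := mul_comm _ _
  -- step 2: the representatives form a set T of card ≤ m
  set T : Finset (Fin n) := J.attach.image (fun j => rep j.1 j.2) with hT
  have hinj : ∀ a ∈ J.attach, ∀ b ∈ J.attach,
      rep a.1 a.2 = rep b.1 b.2 → a = b := by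
    intro a _ b _ hab
    have ha := (Finset.mem_filter.mp (hrepmem a.1 a.2)).2
    have hb := (Finset.mem_filter.mp (hrepmem b.1 b.2)).2
    have : a.1 = b.1 := by rw [← ha, ← hb, hab]
    exact Subtype.ext this
  have hsumT : ∑ j ∈ J.attach, mw (rep j.1 j.2) = ∑ i ∈ T, mw i := by
    rw [hT, Finset.sum_image hinj]
  have hcardT : T.card ≤ m := by
    rw [hT, Finset.card_image_of_injOn hinj, Finset.card_attach]
    calc J.card ≤ (Finset.univ : Finset (Fin m)).card := Finset.card_le_univ J
      _ = m := by simp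
  -- step 3: extend T to S of card m
  obtain ⟨S, hTS', hSuniv, hScard⟩ :=
    Finset.exists_subsuperset_card_eq (Finset.subset_univ T) hcardT (by simpa using hmn)
  have hsum2 : ∑ i ∈ T, mw i ≤ ∑ i ∈ S, mw i :=
    Finset.sum_le_sum_of_subset_of_nonneg hTS' (fun i _ _ => hmwnn i)
  have hSmem : S ∈ (Finset.univ : Finset (Fin n)).powersetCard m :=
    Finset.mem_powersetCard.mpr ⟨Finset.subset_univ S, hScard⟩
  calc TS f w ≤ ∑ j ∈ J.attach, mw (rep j.1 j.2) := h1
    _ = ∑ i ∈ T, mw i := hsumT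
    _ ≤ ∑ i ∈ S, mw i := hsum2
    _ ≤ _ := Finset.le_sup' (fun S => ∑ i ∈ S, mw i) hSmem
end
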